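/- arXiv:2012.10712 — 5 statements merged into one kernel-verified Lean document; each statement's English description precedes it below -/
import Mathlib

section
/- Extended MMP property for multiplicative-increment-path events (Lemma 2.6): let (Z, J) be a Markov multiplicative process with respect to (F_t). Fix s, t ≥ 0 and let Ψ_s : Ω → ℝ^{[0,t]} denote the map ω ↦ (u ↦ Z_{s+u}(ω)/Z_s(ω)), where ℝ^{[0,t]} carries the product σ-algebra. Then for every measurable set B ⊆ ℝ^{[0,t]}, every subset D ⊆ S and every j ∈ S, P_j({Ψ_s ∈ B} ∩ {J_{s+t} ∈ D} | F_s) = ψ(J_s) holds P_j-almost surely, where ψ(m) := P_m({Ψ_0 ∈ B} ∩ {J_t ∈ D}). -/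
open MeasureTheory ProbabilityTheory
open scoped NNReal ENNReal Topology

set_option linter.unusedSectionVars false
set_option maxHeartbeats 1000000

namespace MMPProofAux

variable {Ω : Type*} [MeasurableSpace Ω]
  {S : Type*} [MeasurableSpace S] [MeasurableSingletonClass S] [Countable S]
  {F : ℝ≥0 → MeasurableSpace Ω}
  (hF_le : ∀ t, F t ≤ (inferInstance : MeasurableSpace Ω))
  (hF_mono : Monotone F)
  {J : ℝ≥0 → Ω → S} {Z : ℝ≥0 → Ω → ℝ}
  (hJ_adapted : ∀ t, Measurable[F t] (J t))
  (hZ_adapted : ∀ t, Measurable[F t] (Z t))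
  (hZ_ne : ∀ t ω, Z t ω ≠ 0)
  {P : S → Measure Ω} [∀ j, IsProbabilityMeasure (P j)]
  (hP0 : ∀ j, P j {ω | J 0 ω = j} = 1)
  (hMMP : ∀ (j : S) (s t : ℝ≥0) (f : ℝ → ℝ) (g : S → ℝ),
      Measurable f → (∃ C, ∀ x, |f x| ≤ C) →
      Measurable g → (∃ C, ∀ x, |g x| ≤ C) →
      (P j)[(fun ω => f (Z (s + t) ω / Z s ω) * g (J (s + t) ω)) | F s]
        =ᵐ[P j] fun ω => ∫ ω', f (Z t ω') * g (J t ω') ∂(P (J s ω)))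

lemma telescope (g : ℕ → ℝ) (hg : ∀ m, g m ≠ 0) (p : ℕ) :
    ∏ m ∈ Finset.range p, (g (m+1) / g m) = g p / g 0 := by
  induction p with
  | zero => simp [div_self (hg 0)]
  | succ p ih =>
    rw [Finset.prod_range_succ, ih, div_mul_div_comm, mul_comm (g 0) (g p),
      mul_div_mul_left _ _ (hg p)]

lemma integrable_bdd {μ : Measure Ω} [IsFiniteMeasure μ] {h : Ω → ℝ} (hm : Measurable h)
    (c : ℝ) (hb : ∀ ω, |h ω| ≤ c) : Integrable h μ :=
  (integrable_const c).mono' hm.aestronglyMeasurable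
    (Filter.Eventually.of_forall fun ω => by simpa [Real.norm_eq_abs] using hb ω)

lemma lint_toReal {μ : Measure Ω} [IsFiniteMeasure μ] {h : Ω → ℝ≥0∞} (hm : Measurable h)
    (hb : ∀ ω, h ω ≤ 1) :
    ∫⁻ ω, h ω ∂μ = ENNReal.ofReal (∫ ω, (h ω).toReal ∂μ) := by
  rw [integral_toReal hm.aemeasurable
    (Filter.Eventually.of_forall fun ω => lt_of_le_of_lt (hb ω) ENNReal.one_lt_top),
    ENNReal.ofReal_toReal]
  exact (lt_of_le_of_lt (lintegral_mono hb) (by simpa using measure_lt_top μ Set.univ)).ne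

include hF_le hJ_adapted hZ_adapted hZ_ne hP0 hMMP in
lemma Z0_ae (k : S) : ∀ᵐ ω ∂(P k), Z 0 ω = 1 := by
  set f : ℝ → ℝ := Set.indicator {1} (fun _ => 1) with hfdef
  have hf : Measurable f := measurable_const.indicator (measurableSet_singleton 1)
  have hfb : ∀ x, |f x| ≤ 1 := by
    intro x
    by_cases hx : x ∈ ({1} : Set ℝ) <;> simp only [hfdef, Set.indicator_apply, hx] <;> norm_num
  have h := hMMP k 0 0 f (fun _ => 1) hf ⟨1, hfb⟩ measurable_const ⟨1, fun _ => by norm_num⟩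
  have hfun : (fun ω => f (Z (0 + 0) ω / Z 0 ω) * (fun _ : S => (1:ℝ)) (J (0 + 0) ω))
      = fun _ : Ω => (1:ℝ) := by
    funext ω
    have h0 : (0 : ℝ≥0) + 0 = 0 := add_zero 0
    rw [h0, div_self (hZ_ne 0 ω)]
    simp [hfdef]
  rw [hfun, condExp_const (hF_le 0)] at h
  have hJ0 : ∀ᵐ ω ∂(P k), J 0 ω = k := by
    rw [ae_iff]
    have hmeas : MeasurableSet {ω | J 0 ω = k} :=
      ((hJ_adapted 0).mono (hF_le 0) le_rfl) (measurableSet_singleton k)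
    have heq : {ω | ¬ J 0 ω = k} = {ω | J 0 ω = k}ᶜ := rfl
    rw [heq, prob_compl_eq_zero_iff hmeas]
    exact hP0 k
  have hne : (P k) ≠ 0 := IsProbabilityMeasure.ne_zero _
  have : Filter.NeBot (ae (P k)) := ae_neBot.2 hne
  obtain ⟨ω₀, hω1, hω2⟩ := (hJ0.and h.symm).exists
  simp only [mul_one] at hω2
  rw [hω1] at hω2
  have hZ0m : Measurable (Z 0) := (hZ_adapted 0).mono (hF_le 0) le_rfl
  have hpre : MeasurableSet ((Z 0) ⁻¹' {1}) := hZ0m (measurableSet_singleton 1)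
  have hint : (fun ω' => f (Z 0 ω')) = Set.indicator ((Z 0) ⁻¹' {1}) (fun _ => (1:ℝ)) := by
    funext ω'
    by_cases hx : Z 0 ω' ∈ ({1} : Set ℝ) <;> simp only [hfdef, Set.indicator_apply, Set.mem_preimage, hx, ↓reduceIte]
    · exact (Set.indicator_of_mem (show ω' ∈ (Z 0) ⁻¹' {1} from hx) (fun _ => (1:ℝ))).symm
    · exact (Set.indicator_of_notMem (show ω' ∉ (Z 0) ⁻¹' {1} from hx) (fun _ => (1:ℝ))).symm
  rw [hint] at hω2
  rw [integral_indicator_const (1:ℝ) hpre, smul_eq_mul, mul_one] at hω2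
  have hone : P k ((Z 0) ⁻¹' {1}) = 1 := by
    rwa [← ENNReal.toReal_eq_one_iff]
  rw [ae_iff]
  have heq : {ω | ¬ Z 0 ω = 1} = ((Z 0) ⁻¹' {1})ᶜ := rfl
  rw [heq, prob_compl_eq_zero_iff hpre]
  exact hone

include hF_le hF_mono hJ_adapted hZ_adapted hZ_ne hP0 hMMP in
lemma lemA : ∀ (n : ℕ) (u : ℕ → ℝ≥0), Monotone u → u 0 = 0 →
    ∀ (A : ℕ → Set ℝ), (∀ i, MeasurableSet (A i)) →
    ∀ (D : Set S) (s : ℝ≥0) (j : S) (C : Set Ω), MeasurableSet[F s] C →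
    P j ((C ∩ {ω | ∀ i < n, Z (s + u (i+1)) ω / Z (s + u i) ω ∈ A i})
        ∩ {ω | J (s + u n) ω ∈ D})
      = ∫⁻ ω in C, P (J s ω) (({ω' | ∀ i < n, Z (u (i+1)) ω' / Z (u i) ω' ∈ A i})
          ∩ {ω' | J (u n) ω' ∈ D}) ∂(P j) := by
  have hZm : ∀ a, Measurable (Z a) := fun a => (hZ_adapted a).mono (hF_le a) le_rfl
  have hJm : ∀ a, Measurable (J a) := fun a => (hJ_adapted a).mono (hF_le a) le_rfl
  have hDm : ∀ D' : Set S, MeasurableSet D' := fun D' => D'.to_countable.measurableSet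
  intro n
  induction n with
  | zero =>
    intro u hu hu0 A hA D s j C hC
    have h1 : {ω : Ω | ∀ i < 0, Z (s + u (i+1)) ω / Z (s + u i) ω ∈ A i} = Set.univ := by
      ext ω; simp
    have h2 : {ω' : Ω | ∀ i < 0, Z (u (i+1)) ω' / Z (u i) ω' ∈ A i} = Set.univ := by
      ext ω; simp
    rw [h1, h2, Set.inter_univ, Set.univ_inter, hu0, add_zero]
    have hkey : ∀ k, P k {ω' | J 0 ω' ∈ D} = Set.indicator D (fun _ => (1:ℝ≥0∞)) k := by
      intro k
      by_cases hk : k ∈ D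
      · rw [Set.indicator_of_mem hk]
        refine le_antisymm prob_le_one ?_
        calc (1:ℝ≥0∞) = P k {ω | J 0 ω = k} := (hP0 k).symm
          _ ≤ P k {ω' | J 0 ω' ∈ D} := measure_mono (fun ω h => by
              simp only [Set.mem_setOf_eq] at h ⊢; rw [h]; exact hk)
      · rw [Set.indicator_of_notMem hk]
        refine le_antisymm ?_ zero_le
        have hsub : {ω' : Ω | J 0 ω' ∈ D} ⊆ {ω | J 0 ω = k}ᶜ := by
          intro ω h hk'
          simp only [Set.mem_setOf_eq] at h hk'
          exact hk (hk' ▸ h)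
        calc P k {ω' | J 0 ω' ∈ D} ≤ P k {ω | J 0 ω = k}ᶜ := measure_mono hsub
          _ = 0 := (prob_compl_eq_zero_iff
              (((hJ_adapted 0).mono (hF_le 0) le_rfl) (measurableSet_singleton k))).2 (hP0 k)
    have hind : ∀ ω, P (J s ω) {ω' | J 0 ω' ∈ D}
        = Set.indicator ((J s) ⁻¹' D) (fun _ => (1:ℝ≥0∞)) ω := by
      intro ω
      rw [hkey (J s ω)]
      by_cases hω : J s ω ∈ D <;>
        simp [hω, Set.indicator_apply, Set.mem_preimage]
    calc P j (C ∩ {ω | J s ω ∈ D})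
        = ((P j).restrict C) ((J s) ⁻¹' D) := by
          rw [Measure.restrict_apply (hJm s (hDm D))]
          rw [Set.inter_comm]
          rfl
      _ = ∫⁻ ω, Set.indicator ((J s) ⁻¹' D) (fun _ => (1:ℝ≥0∞)) ω ∂((P j).restrict C) := by
          rw [lintegral_indicator (hJm s (hDm D))]
          simp
      _ = ∫⁻ ω in C, P (J s ω) {ω' | J 0 ω' ∈ D} ∂(P j) := by
          refine lintegral_congr fun ω => ?_
          rw [hind ω]
  | succ n IH =>
    intro u hu hu0 A hA D s j C hC
    set u' : ℕ → ℝ≥0 := fun i => u (i+1) - u 1 with hu'def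
    have hkey : ∀ i, u 1 + u' i = u (i+1) := by
      intro i
      simp only [hu'def]
      exact add_tsub_cancel_of_le (hu (by omega : (1:ℕ) ≤ i+1))
    have hu'mono : Monotone u' := fun a b hab =>
      tsub_le_tsub_right (hu (by omega : a+1 ≤ b+1)) _
    have hu'0 : u' 0 = 0 := by simp [hu'def]
    set A' : ℕ → Set ℝ := fun i => A (i+1) with hA'def
    have hA' : ∀ i, MeasurableSet (A' i) := fun i => hA (i+1)
    set E' : Set Ω := {ω' | ∀ i < n, Z (u' (i+1)) ω' / Z (u' i) ω' ∈ A' i}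
        ∩ {ω' | J (u' n) ω' ∈ D} with hE'def
    set ψ' : S → ℝ := fun k => (P k E').toReal with hψ'def
    have hψ'b : ∀ k, |ψ' k| ≤ 1 := fun k => by
      rw [hψ'def, abs_of_nonneg ENNReal.toReal_nonneg]
      simpa using ENNReal.toReal_mono ENNReal.one_ne_top (prob_le_one (μ := P k) (s := E'))
    have hψ'nn : ∀ k, 0 ≤ ψ' k := fun k => ENNReal.toReal_nonneg
    set f : ℝ → ℝ := Set.indicator (A 0) (fun _ => 1) with hfdef
    have hf : Measurable f := measurable_const.indicator (hA 0)
    have hfb : ∀ x, |f x| ≤ 1 := fun x => by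
      by_cases hx : x ∈ A 0 <;> simp [hfdef, hx]
    have hfnn : ∀ x, 0 ≤ f x := fun x => by
      by_cases hx : x ∈ A 0 <;> simp [hfdef, hx]
    set W : Set Ω := {ω | Z (s + u 1) ω / Z s ω ∈ A 0} with hWdef
    have hWglob : MeasurableSet W := ((hZm (s + u 1)).div (hZm s)) (hA 0)
    have hle1 : s ≤ s + u 1 := le_self_add
    have hWm : MeasurableSet[F (s + u 1)] W :=
      ((hZ_adapted (s + u 1)).div ((hZ_adapted s).mono (hF_mono hle1) le_rfl)) (hA 0)
    have hC'm : MeasurableSet[F (s + u 1)] (C ∩ W) :=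
      (hF_mono hle1 _ hC).inter hWm
    have hsu : ∀ i, s + u 1 + u' i = s + u (i+1) := fun i => by rw [add_assoc, hkey]
    have hsplitS : {ω : Ω | ∀ i < n+1, Z (s + u (i+1)) ω / Z (s + u i) ω ∈ A i}
        = W ∩ {ω | ∀ i < n, Z (s + u (i+1+1)) ω / Z (s + u (i+1)) ω ∈ A' i} := by
      ext ω
      simp only [hWdef, hA'def, Set.mem_setOf_eq, Set.mem_inter_iff]
      constructor
      · intro h
        refine ⟨?_, fun i hi => h (i+1) (by omega)⟩
        have h0 := h 0 (by omega)
        rwa [hu0, add_zero] at h0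
      · rintro ⟨h0, h⟩ i hi
        match i with
        | 0 => rwa [hu0, add_zero]
        | Nat.succ i => exact h i (by omega)
    set W0 : Set Ω := {ω | Z (u 1) ω / Z (u 0) ω ∈ A 0} with hW0def
    have hW0glob : MeasurableSet W0 := ((hZm (u 1)).div (hZm (u 0))) (hA 0)
    have hW0m : MeasurableSet[F (u 1)] W0 :=
      ((hZ_adapted (u 1)).div
        ((hZ_adapted (u 0)).mono (hF_mono (hu (by omega : (0:ℕ) ≤ 1))) le_rfl)) (hA 0)
    have hsplit0 : {ω' : Ω | ∀ i < n+1, Z (u (i+1)) ω' / Z (u i) ω' ∈ A i}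
        = W0 ∩ {ω | ∀ i < n, Z (u (i+1+1)) ω / Z (u (i+1)) ω ∈ A' i} := by
      ext ω
      simp only [hW0def, hA'def, Set.mem_setOf_eq, Set.mem_inter_iff]
      constructor
      · intro h
        exact ⟨h 0 (by omega), fun i hi => h (i+1) (by omega)⟩
      · rintro ⟨h0, h⟩ i hi
        match i with
        | 0 => exact h0
        | Nat.succ i => exact h i (by omega)
    -- inner claim
    have hinner : ∀ k : S, ∫ ω', f (Z (u 1) ω') * ψ' (J (u 1) ω') ∂(P k)
        = (P k (({ω' | ∀ i < n+1, Z (u (i+1)) ω' / Z (u i) ω' ∈ A i})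
            ∩ {ω' | J (u (n+1)) ω' ∈ D})).toReal := by
      intro k
      have hIH2 := IH u' hu'mono hu'0 A' hA' D (u 1) k W0 hW0m
      rw [← hE'def] at hIH2
      simp only [hkey] at hIH2
      have hset0 : ({ω' : Ω | ∀ i < n+1, Z (u (i+1)) ω' / Z (u i) ω' ∈ A i})
            ∩ {ω' | J (u (n+1)) ω' ∈ D}
          = (W0 ∩ {ω | ∀ i < n, Z (u (i+1+1)) ω / Z (u (i+1)) ω ∈ A' i})
            ∩ {ω | J (u (n+1)) ω ∈ D} := by
        rw [hsplit0]
      rw [hset0, hIH2, ← lintegral_indicator hW0glob,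
        lint_toReal (μ := P k) (h := W0.indicator fun ω => P (J (u 1) ω) E')
          (Measurable.indicator
            ((measurable_of_countable (fun m => P m E')).comp (hJm (u 1))) hW0glob)
          (fun ω => by
            by_cases hω : ω ∈ W0
            · rw [Set.indicator_of_mem hω]; exact prob_le_one
            · rw [Set.indicator_of_notMem hω]; exact zero_le),
        ENNReal.toReal_ofReal (integral_nonneg (fun ω => ENNReal.toReal_nonneg))]
      refine integral_congr_ae ?_
      filter_upwards [Z0_ae hF_le hJ_adapted hZ_adapted hZ_ne hP0 hMMP k] with ω' hω'
      have hq : Z (u 1) ω' / Z (u 0) ω' = Z (u 1) ω' := by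
        rw [hu0, hω', div_one]
      by_cases hmem : ω' ∈ W0
      · have hA0 : Z (u 1) ω' ∈ A 0 := by
          have := hmem
          simp only [hW0def, Set.mem_setOf_eq] at this
          rwa [hq] at this
        rw [Set.indicator_of_mem hmem, hfdef]
        simp [Set.indicator_of_mem hA0, hψ'def]
      · have hA0 : Z (u 1) ω' ∉ A 0 := by
          intro h
          apply hmem
          simp only [hW0def, Set.mem_setOf_eq]
          rwa [hq]
        rw [Set.indicator_of_notMem hmem, hfdef]
        simp [Set.indicator_of_notMem hA0]
    -- main chain
    have hset1 : (C ∩ {ω | ∀ i < n+1, Z (s + u (i+1)) ω / Z (s + u i) ω ∈ A i})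
          ∩ {ω | J (s + u (n+1)) ω ∈ D}
        = ((C ∩ W) ∩ {ω | ∀ i < n, Z (s + u 1 + u' (i+1)) ω / Z (s + u 1 + u' i) ω ∈ A' i})
          ∩ {ω | J (s + u 1 + u' n) ω ∈ D} := by
      simp only [hsu]
      rw [hsplitS]
      ext ω
      simp only [Set.mem_inter_iff]
      tauto
    have hIH1 := IH u' hu'mono hu'0 A' hA' D (s + u 1) j (C ∩ W) hC'm
    rw [← hE'def] at hIH1
    have hintg : Integrable (fun ω => f (Z (s + u 1) ω / Z s ω) * ψ' (J (s + u 1) ω)) (P j) := by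
      refine integrable_bdd ?_ 1 ?_
      · exact (hf.comp ((hZm (s + u 1)).div (hZm s))).mul
          ((measurable_of_countable ψ').comp (hJm (s + u 1)))
      · intro ω
        rw [abs_mul]
        calc |f (Z (s + u 1) ω / Z s ω)| * |ψ' (J (s + u 1) ω)|
            ≤ 1 * 1 := mul_le_mul (hfb _) (hψ'b _) (abs_nonneg _) zero_le_one
          _ = 1 := mul_one 1
    calc P j ((C ∩ {ω | ∀ i < n+1, Z (s + u (i+1)) ω / Z (s + u i) ω ∈ A i})
          ∩ {ω | J (s + u (n+1)) ω ∈ D})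
        = P j (((C ∩ W) ∩ {ω | ∀ i < n, Z (s + u 1 + u' (i+1)) ω / Z (s + u 1 + u' i) ω ∈ A' i})
            ∩ {ω | J (s + u 1 + u' n) ω ∈ D}) := by rw [hset1]
      _ = ∫⁻ ω in C ∩ W, P (J (s + u 1) ω) E' ∂(P j) := hIH1
      _ = ∫⁻ ω in C, W.indicator (fun ω => P (J (s + u 1) ω) E') ω ∂(P j) := by
          rw [show (P j).restrict (C ∩ W) = ((P j).restrict C).restrict W by
            rw [Measure.restrict_restrict hWglob, Set.inter_comm]]
          rw [← lintegral_indicator hWglob]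
      _ = ENNReal.ofReal (∫ ω in C, f (Z (s + u 1) ω / Z s ω) * ψ' (J (s + u 1) ω) ∂(P j)) := by
          rw [lint_toReal (μ := (P j).restrict C)
            (h := W.indicator fun ω => P (J (s + u 1) ω) E')
            (Measurable.indicator
              ((measurable_of_countable (fun m => P m E')).comp (hJm (s + u 1))) hWglob)
            (fun ω => by
              by_cases hω : ω ∈ W
              · rw [Set.indicator_of_mem hω]; exact prob_le_one
              · rw [Set.indicator_of_notMem hω]; exact zero_le)]
          congr 1
          refine integral_congr_ae (Filter.Eventually.of_forall fun ω => ?_)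
          dsimp only
          by_cases hω : ω ∈ W
          · have hA0 : Z (s + u 1) ω / Z s ω ∈ A 0 := by
              have := hω; simp only [hWdef, Set.mem_setOf_eq] at this; exact this
            rw [Set.indicator_of_mem hω, hfdef]
            simp [Set.indicator_of_mem hA0, hψ'def]
          · have hA0 : Z (s + u 1) ω / Z s ω ∉ A 0 := by
              intro h; apply hω; simp only [hWdef, Set.mem_setOf_eq]; exact h
            rw [Set.indicator_of_notMem hω, hfdef]
            simp [Set.indicator_of_notMem hA0]
      _ = ENNReal.ofReal (∫ ω in C,
            ((P j)[(fun ω => f (Z (s + u 1) ω / Z s ω) * ψ' (J (s + u 1) ω)) | F s]) ω ∂(P j)) := by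
          rw [setIntegral_condExp (hF_le s) hintg hC]
      _ = ENNReal.ofReal (∫ ω in C,
            (∫ ω', f (Z (u 1) ω') * ψ' (J (u 1) ω') ∂(P (J s ω))) ∂(P j)) := by
          congr 1
          refine setIntegral_congr_ae (hF_le s _ hC) ?_
          exact (hMMP j s (u 1) f ψ' hf ⟨1, hfb⟩ (measurable_of_countable ψ')
            ⟨1, hψ'b⟩).mono (fun ω h _ => h)
      _ = ENNReal.ofReal (∫ ω in C,
            (P (J s ω) (({ω' | ∀ i < n+1, Z (u (i+1)) ω' / Z (u i) ω' ∈ A i})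
              ∩ {ω' | J (u (n+1)) ω' ∈ D})).toReal ∂(P j)) := by
          congr 1
          exact integral_congr_ae (Filter.Eventually.of_forall fun ω => hinner (J s ω))
      _ = ∫⁻ ω in C, P (J s ω) (({ω' | ∀ i < n+1, Z (u (i+1)) ω' / Z (u i) ω' ∈ A i})
            ∩ {ω' | J (u (n+1)) ω' ∈ D}) ∂(P j) := by
          rw [lint_toReal (μ := (P j).restrict C)
            (h := fun ω => P (J s ω) (({ω' | ∀ i < n+1, Z (u (i+1)) ω' / Z (u i) ω' ∈ A i})
              ∩ {ω' | J (u (n+1)) ω' ∈ D}))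
            ((measurable_of_countable (fun m => P m (({ω' | ∀ i < n+1,
                Z (u (i+1)) ω' / Z (u i) ω' ∈ A i})
              ∩ {ω' | J (u (n+1)) ω' ∈ D}))).comp (hJm s))
            (fun ω => prob_le_one)]


include hF_le hF_mono hJ_adapted hZ_adapted hZ_ne hP0 hMMP in
lemma lemB (n : ℕ) (u : ℕ → ℝ≥0) (hu : Monotone u) (hu0 : u 0 = 0)
    (D : Set S) (s : ℝ≥0) (j : S) (C : Set Ω) (hC : MeasurableSet[F s] C)
    (T : Set (Fin n → ℝ)) (hT : MeasurableSet T) :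
    P j ((C ∩ ((fun ω (i : Fin n) => Z (s + u (↑i+1)) ω / Z (s + u ↑i) ω) ⁻¹' T))
        ∩ {ω | J (s + u n) ω ∈ D})
      = ∫⁻ ω in C, P (J s ω) (((fun ω' (i : Fin n) => Z (u (↑i+1)) ω' / Z (u ↑i) ω') ⁻¹' T)
          ∩ {ω' | J (u n) ω' ∈ D}) ∂(P j) := by
  have hZm : ∀ a, Measurable (Z a) := fun a => (hZ_adapted a).mono (hF_le a) le_rfl
  have hJm : ∀ a, Measurable (J a) := fun a => (hJ_adapted a).mono (hF_le a) le_rfl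
  have hDm : ∀ D' : Set S, MeasurableSet D' := fun D' => D'.to_countable.measurableSet
  set X : Ω → (Fin n → ℝ) := fun ω i => Z (s + u (↑i+1)) ω / Z (s + u ↑i) ω with hXdef
  set Y : Ω → (Fin n → ℝ) := fun ω' i => Z (u (↑i+1)) ω' / Z (u ↑i) ω' with hYdef
  have hX : Measurable X := measurable_pi_lambda _ (fun i => (hZm _).div (hZm _))
  have hY : Measurable Y := measurable_pi_lambda _ (fun i => (hZm _).div (hZm _))
  have hCg : MeasurableSet C := hF_le s _ hC
  set E1 : Set Ω := {ω | J (s + u n) ω ∈ D} with hE1def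
  set E0 : Set Ω := {ω' | J (u n) ω' ∈ D} with hE0def
  have hE1 : MeasurableSet E1 := hJm _ (hDm D)
  have hE0 : MeasurableSet E0 := hJm _ (hDm D)
  set κ : Ω → Measure (Fin n → ℝ) := fun ω => ((P (J s ω)).restrict E0).map Y with hκdef
  have hκmeas : Measurable κ := by
    have h : Measurable (fun k : S => ((P k).restrict E0).map Y) := measurable_of_countable _
    exact h.comp (hJm s)
  set ρ1 : Measure (Fin n → ℝ) := ((P j).restrict (C ∩ E1)).map X with hρ1
  set ρ2 : Measure (Fin n → ℝ) := ((P j).restrict C).bind κ with hρ2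
  have hρ1app : ∀ T' : Set (Fin n → ℝ), MeasurableSet T' →
      ρ1 T' = P j ((C ∩ (X ⁻¹' T')) ∩ E1) := by
    intro T' hT'
    rw [hρ1, Measure.map_apply hX hT', Measure.restrict_apply (hX hT')]
    congr 1
    ext ω; simp only [Set.mem_inter_iff, Set.mem_preimage]; tauto
  have hρ2app : ∀ T' : Set (Fin n → ℝ), MeasurableSet T' →
      ρ2 T' = ∫⁻ ω in C, P (J s ω) ((Y ⁻¹' T') ∩ E0) ∂(P j) := by
    intro T' hT'
    rw [hρ2, Measure.bind_apply hT' hκmeas.aemeasurable]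
    refine lintegral_congr fun ω => ?_
    rw [hκdef]
    dsimp only
    rw [Measure.map_apply hY hT', Measure.restrict_apply (hY hT')]
  have hagree : ∀ T' ∈ Set.pi Set.univ '' Set.pi Set.univ
      (fun _ : Fin n => {s : Set ℝ | MeasurableSet s}), ρ1 T' = ρ2 T' := by
    rintro T' ⟨A'', hA'', rfl⟩
    have hA''m : ∀ i, MeasurableSet (A'' i) := fun i => hA'' i (Set.mem_univ i)
    have hTm : MeasurableSet (Set.pi Set.univ A'') := MeasurableSet.univ_pi hA''m
    rw [hρ1app _ hTm, hρ2app _ hTm]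
    set A : ℕ → Set ℝ := fun m => if h : m < n then A'' ⟨m, h⟩ else Set.univ with hAdef
    have hAm : ∀ m, MeasurableSet (A m) := fun m => by
      rw [hAdef]; dsimp only
      split
      · exact hA''m _
      · exact MeasurableSet.univ
    have hXset : X ⁻¹' (Set.pi Set.univ A'')
        = {ω | ∀ m, ∀ (hm : m < n), Z (s + u (m+1)) ω / Z (s + u m) ω ∈ A m} := by
      ext ω
      simp only [Set.mem_preimage, Set.mem_pi, Set.mem_univ, forall_true_left,
        Set.mem_setOf_eq, hXdef, hAdef]
      constructor
      · intro h m hm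
        rw [dif_pos hm]
        exact h ⟨m, hm⟩
      · intro h i
        have h2 := h ↑i i.isLt
        rwa [dif_pos i.isLt] at h2
    have hYset : Y ⁻¹' (Set.pi Set.univ A'')
        = {ω' | ∀ m, ∀ (hm : m < n), Z (u (m+1)) ω' / Z (u m) ω' ∈ A m} := by
      ext ω
      simp only [Set.mem_preimage, Set.mem_pi, Set.mem_univ, forall_true_left,
        Set.mem_setOf_eq, hYdef, hAdef]
      constructor
      · intro h m hm
        rw [dif_pos hm]
        exact h ⟨m, hm⟩
      · intro h i
        have h2 := h ↑i i.isLt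
        rwa [dif_pos i.isLt] at h2
    rw [hXset, hYset, hE1def, hE0def]
    exact lemA hF_le hF_mono hJ_adapted hZ_adapted hZ_ne hP0 hMMP n u hu hu0 A hAm D s j C hC
  haveI : IsFiniteMeasure ρ1 := by
    rw [hρ1]
    infer_instance
  have huniv : ρ1 Set.univ = ρ2 Set.univ := by
    refine hagree Set.univ ⟨fun _ => Set.univ, fun i _ => by simp, ?_⟩
    simp
  have hext : ρ1 = ρ2 :=
    MeasureTheory.ext_of_generate_finite _ generateFrom_pi.symm
      isPiSystem_pi hagree huniv
  have h1 := hρ1app T hT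
  rw [← h1, hext, hρ2app T hT]


lemma prod_if_le {n : ℕ} (g : ℕ → ℝ) (hg : ∀ m, g m ≠ 0) (p : ℕ) (hp : p + 1 ≤ n)
    (r : Fin n → ℝ) (hr : ∀ m : Fin n, r m = g (↑m + 1) / g ↑m) :
    ∏ m : Fin n, (if (m : ℕ) ≤ p then r m else 1) = g (p + 1) / g 0 := by
  set fnat : ℕ → ℝ := fun m => if m ≤ p then g (m + 1) / g m else 1 with hfnat
  calc ∏ m : Fin n, (if (m : ℕ) ≤ p then r m else 1)
      = ∏ m : Fin n, fnat ↑m := Finset.prod_congr rfl fun m _ => by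
        by_cases hm : (m : ℕ) ≤ p <;> simp [hfnat, hm, hr m]
    _ = ∏ m ∈ Finset.range n, fnat m := Fin.prod_univ_eq_prod_range fnat n
    _ = ∏ m ∈ Finset.range (p + 1), fnat m :=
        (Finset.prod_subset (Finset.range_subset_range.2 hp) (fun x _ hx => by
          simp only [Finset.mem_range] at hx
          simp only [hfnat]
          rw [if_neg (by omega)])).symm
    _ = ∏ m ∈ Finset.range (p + 1), (g (m + 1) / g m) :=
        Finset.prod_congr rfl fun m hm => by
          simp only [Finset.mem_range] at hm
          simp only [hfnat]
          rw [if_pos (by omega)]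
    _ = g (p + 1) / g 0 := telescope g hg (p + 1)

include hF_le hF_mono hJ_adapted hZ_adapted hZ_ne hP0 hMMP in
lemma lemC (s t : ℝ≥0) (D : Set S) (j : S) (C : Set Ω) (hC : MeasurableSet[F s] C)
    (B : Set ((Set.Icc (0 : ℝ≥0) t) → ℝ)) (hB : MeasurableSet B) :
    P j ((C ∩ ((fun ω (v : Set.Icc (0 : ℝ≥0) t) => Z (s + ↑v) ω / Z s ω) ⁻¹' B))
        ∩ {ω | J (s + t) ω ∈ D})
      = ∫⁻ ω in C, P (J s ω) (((fun ω' (v : Set.Icc (0 : ℝ≥0) t) => Z ↑v ω' / Z 0 ω') ⁻¹' B)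
          ∩ {ω' | J t ω' ∈ D}) ∂(P j) := by
  have hZm : ∀ a, Measurable (Z a) := fun a => (hZ_adapted a).mono (hF_le a) le_rfl
  have hJm : ∀ a, Measurable (J a) := fun a => (hJ_adapted a).mono (hF_le a) le_rfl
  have hDm : ∀ D' : Set S, MeasurableSet D' := fun D' => D'.to_countable.measurableSet
  set X : Ω → ((Set.Icc (0 : ℝ≥0) t) → ℝ) :=
    fun ω v => Z (s + ↑v) ω / Z s ω with hXdef
  set Y : Ω → ((Set.Icc (0 : ℝ≥0) t) → ℝ) :=
    fun ω' v => Z ↑v ω' / Z 0 ω' with hYdef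
  have hX : Measurable X := measurable_pi_lambda _ (fun v => (hZm _).div (hZm _))
  have hY : Measurable Y := measurable_pi_lambda _ (fun v => (hZm _).div (hZm _))
  have hCg : MeasurableSet C := hF_le s _ hC
  set E1 : Set Ω := {ω | J (s + t) ω ∈ D} with hE1def
  set E0 : Set Ω := {ω' | J t ω' ∈ D} with hE0def
  have hE1 : MeasurableSet E1 := hJm _ (hDm D)
  have hE0 : MeasurableSet E0 := hJm _ (hDm D)
  set κ : Ω → Measure ((Set.Icc (0 : ℝ≥0) t) → ℝ) :=
    fun ω => ((P (J s ω)).restrict E0).map Y with hκdef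
  have hκmeas : Measurable κ := by
    have h : Measurable (fun k : S => ((P k).restrict E0).map Y) := measurable_of_countable _
    exact h.comp (hJm s)
  set ρ1 : Measure ((Set.Icc (0 : ℝ≥0) t) → ℝ) := ((P j).restrict (C ∩ E1)).map X with hρ1
  set ρ2 : Measure ((Set.Icc (0 : ℝ≥0) t) → ℝ) := ((P j).restrict C).bind κ with hρ2
  have hρ1app : ∀ B' : Set ((Set.Icc (0 : ℝ≥0) t) → ℝ), MeasurableSet B' →
      ρ1 B' = P j ((C ∩ (X ⁻¹' B')) ∩ E1) := by
    intro B' hB'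
    rw [hρ1, Measure.map_apply hX hB', Measure.restrict_apply (hX hB')]
    congr 1
    ext ω; simp only [Set.mem_inter_iff, Set.mem_preimage]; tauto
  have hρ2app : ∀ B' : Set ((Set.Icc (0 : ℝ≥0) t) → ℝ), MeasurableSet B' →
      ρ2 B' = ∫⁻ ω in C, P (J s ω) ((Y ⁻¹' B') ∩ E0) ∂(P j) := by
    intro B' hB'
    rw [hρ2, Measure.bind_apply hB' hκmeas.aemeasurable]
    refine lintegral_congr fun ω => ?_
    rw [hκdef]
    dsimp only
    rw [Measure.map_apply hY hB', Measure.restrict_apply (hY hB')]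
  have hagree : ∀ B' ∈ MeasureTheory.measurableCylinders (fun _ : Set.Icc (0 : ℝ≥0) t => ℝ),
      ρ1 B' = ρ2 B' := by
    intro B' hB'
    obtain ⟨I, T, hTm, rfl⟩ := (MeasureTheory.mem_measurableCylinders B').1 hB'
    classical
    set l : List ℝ≥0 := (I.image (fun x : Set.Icc (0 : ℝ≥0) t => (x : ℝ≥0))).sort (· ≤ ·)
      with hldef
    have hsort : l.Pairwise (· ≤ ·) := Finset.pairwise_sort _ _
    have hmem_le : ∀ x ∈ l, x ≤ t := by
      intro x hx
      rw [hldef, Finset.mem_sort] at hx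
      obtain ⟨y, _, rfl⟩ := Finset.mem_image.1 hx
      exact y.2.2
    set n : ℕ := l.length + 1 with hndef
    set u : ℕ → ℝ≥0 := fun m => if m = 0 then 0 else l.getD (m - 1) t with hudef
    have hu0 : u 0 = 0 := by simp [hudef]
    have hgetD_le : ∀ m : ℕ, l.getD m t ≤ t := by
      intro m
      by_cases hm : m < l.length
      · rw [List.getD_eq_getElem _ _ hm]
        exact hmem_le _ (List.getElem_mem hm)
      · rw [List.getD_eq_default _ _ (by omega)]
    have humono : Monotone u := by
      intro a b hab
      by_cases ha : a = 0
      · simp [hudef, ha]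
      · have hb : b ≠ 0 := by omega
        rw [hudef]
        simp only [if_neg ha, if_neg hb]
        by_cases hblt : b - 1 < l.length
        · have halt : a - 1 < l.length := by omega
          rw [List.getD_eq_getElem _ _ hblt, List.getD_eq_getElem _ _ halt]
          have := hsort.rel_get_of_le
            (Fin.mk_le_mk.2 (by omega : a - 1 ≤ b - 1) : (⟨a-1, halt⟩ : Fin l.length) ≤ ⟨b-1, hblt⟩)
          simpa using this
        · have hbd : l.getD (b - 1) t = t := List.getD_eq_default _ _ (by omega)
          rw [hbd]
          exact hgetD_le _
    have hun : u n = t := by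
      rw [hudef, hndef]
      simp only [Nat.add_sub_cancel, if_neg (Nat.succ_ne_zero _)]
      exact List.getD_eq_default _ _ le_rfl
    have hmeml : ∀ i : ↥I, ((i : Set.Icc (0 : ℝ≥0) t) : ℝ≥0) ∈ l := by
      intro i
      rw [hldef, Finset.mem_sort]
      exact Finset.mem_image_of_mem _ i.2
    have hidx : ∀ i : ↥I, l.idxOf ((i : Set.Icc (0 : ℝ≥0) t) : ℝ≥0) < l.length :=
      fun i => List.idxOf_lt_length_iff.2 (hmeml i)
    have hup : ∀ i : ↥I, u (l.idxOf ((i : Set.Icc (0 : ℝ≥0) t) : ℝ≥0) + 1)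
        = ((i : Set.Icc (0 : ℝ≥0) t) : ℝ≥0) := by
      intro i
      rw [hudef]
      simp only [if_neg (Nat.succ_ne_zero _), Nat.add_sub_cancel]
      rw [List.getD_eq_getElem _ _ (hidx i)]
      exact List.getElem_idxOf (hidx i)
    set θ : (Fin n → ℝ) → (↥I → ℝ) :=
      fun r i => ∏ m : Fin n,
        (if (m : ℕ) ≤ l.idxOf ((i : Set.Icc (0 : ℝ≥0) t) : ℝ≥0) then r m else 1) with hθdef
    have hθmeas : Measurable θ := by
      refine measurable_pi_lambda _ fun i => Finset.measurable_prod _ fun m _ => ?_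
      by_cases hm : (m : ℕ) ≤ l.idxOf ((i : Set.Icc (0 : ℝ≥0) t) : ℝ≥0) <;>
        simp only [hm, if_true, if_false]
      · exact measurable_pi_apply m
      · exact measurable_const
    have hcylm : MeasurableSet (MeasureTheory.cylinder (α := fun _ : Set.Icc (0 : ℝ≥0) t => ℝ) I T) := by
      have hrm : Measurable (I.restrict : ((Set.Icc (0 : ℝ≥0) t) → ℝ) → (↥I → ℝ)) :=
        measurable_pi_lambda _ fun i => measurable_pi_apply _
      exact hrm hTm
    have hXcyl : X ⁻¹' (MeasureTheory.cylinder (α := fun _ : Set.Icc (0 : ℝ≥0) t => ℝ) I T)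
        = (fun ω (i : Fin n) => Z (s + u (↑i + 1)) ω / Z (s + u ↑i) ω) ⁻¹' (θ ⁻¹' T) := by
      ext ω
      simp only [Set.mem_preimage, MeasureTheory.mem_cylinder]
      have hfun : I.restrict (X ω) = θ (fun i : Fin n => Z (s + u (↑i + 1)) ω / Z (s + u ↑i) ω) := by
        funext i
        rw [hθdef]
        dsimp only
        rw [prod_if_le (fun m => Z (s + u m) ω) (fun m => hZ_ne _ ω) _
          (by have := hidx i; omega) _ (fun m => rfl)]
        rw [hup i, hu0, add_zero]
        rfl
      rw [hfun]
    have hYcyl : Y ⁻¹' (MeasureTheory.cylinder (α := fun _ : Set.Icc (0 : ℝ≥0) t => ℝ) I T)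
        = (fun ω' (i : Fin n) => Z (u (↑i + 1)) ω' / Z (u ↑i) ω') ⁻¹' (θ ⁻¹' T) := by
      ext ω
      simp only [Set.mem_preimage, MeasureTheory.mem_cylinder]
      have hfun : I.restrict (Y ω) = θ (fun i : Fin n => Z (u (↑i + 1)) ω / Z (u ↑i) ω) := by
        funext i
        rw [hθdef]
        dsimp only
        rw [prod_if_le (fun m => Z (u m) ω) (fun m => hZ_ne _ ω) _
          (by have := hidx i; omega) _ (fun m => rfl)]
        rw [hup i, hu0]
        rfl
      rw [hfun]
    rw [hρ1app _ hcylm, hρ2app _ hcylm, hXcyl, hYcyl, hE1def, hE0def]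
    have hlemB := lemB hF_le hF_mono hJ_adapted hZ_adapted hZ_ne hP0 hMMP n u humono hu0
      D s j C hC (θ ⁻¹' T) (hθmeas hTm)
    rw [hun] at hlemB
    exact hlemB
  haveI : IsFiniteMeasure ρ1 := by
    rw [hρ1]
    infer_instance
  have huniv : ρ1 Set.univ = ρ2 Set.univ := by
    refine hagree Set.univ ?_
    rw [MeasureTheory.mem_measurableCylinders]
    exact ⟨∅, Set.univ, MeasurableSet.univ, by simp [MeasureTheory.cylinder]⟩
  have hext : ρ1 = ρ2 :=
    MeasureTheory.ext_of_generate_finite _ MeasureTheory.generateFrom_measurableCylinders.symm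
      MeasureTheory.isPiSystem_measurableCylinders hagree huniv
  have h1 := hρ1app B hB
  rw [← h1, hext, hρ2app B hB]

end MMPProofAux

open MMPProofAux in
/-- Extended MMP property for multiplicative-increment-path events (Lemma 2.6). -/
theorem mmp_path_extension
    {Ω : Type*} [MeasurableSpace Ω]
    {S : Type*} [MeasurableSpace S] [MeasurableSingletonClass S] [Countable S]
    (F : ℝ≥0 → MeasurableSpace Ω)
    (hF_le : ∀ t, F t ≤ (inferInstance : MeasurableSpace Ω))
    (hF_mono : Monotone F)
    (J : ℝ≥0 → Ω → S) (Z : ℝ≥0 → Ω → ℝ)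
    (hJ_adapted : ∀ t, Measurable[F t] (J t))
    (hZ_adapted : ∀ t, Measurable[F t] (Z t))
    (hZ_ne : ∀ t ω, Z t ω ≠ 0)
    (P : S → Measure Ω) [∀ j, IsProbabilityMeasure (P j)]
    (hP0 : ∀ j, P j {ω | J 0 ω = j} = 1)
    -- the MMP property
    (hMMP : ∀ (j : S) (s t : ℝ≥0) (f : ℝ → ℝ) (g : S → ℝ),
      Measurable f → (∃ C, ∀ x, |f x| ≤ C) →
      Measurable g → (∃ C, ∀ x, |g x| ≤ C) →
      (P j)[(fun ω => f (Z (s + t) ω / Z s ω) * g (J (s + t) ω)) | F s]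
        =ᵐ[P j] fun ω => ∫ ω', f (Z t ω') * g (J t ω') ∂(P (J s ω))) :
    ∀ (s t : ℝ≥0) (B : Set ((Set.Icc (0 : ℝ≥0) t) → ℝ)) (D : Set S) (j : S),
      MeasurableSet B →
      (P j)[(Set.indicator
          {ω | (fun u : Set.Icc (0 : ℝ≥0) t => Z (s + ↑u) ω / Z s ω) ∈ B ∧ J (s + t) ω ∈ D}
          fun _ => (1 : ℝ)) | F s]
        =ᵐ[P j] fun ω =>
          ((P (J s ω))
            {ω' | (fun u : Set.Icc (0 : ℝ≥0) t => Z (↑u) ω' / Z 0 ω') ∈ B ∧ J t ω' ∈ D}).toReal := by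
  intro s t B D j hB
  have hZm : ∀ a, Measurable (Z a) := fun a => (hZ_adapted a).mono (hF_le a) le_rfl
  have hJm : ∀ a, Measurable (J a) := fun a => (hJ_adapted a).mono (hF_le a) le_rfl
  have hDm : ∀ D' : Set S, MeasurableSet D' := fun D' => D'.to_countable.measurableSet
  have hX : Measurable (fun ω (u : Set.Icc (0 : ℝ≥0) t) => Z (s + ↑u) ω / Z s ω) :=
    measurable_pi_lambda _ (fun v => (hZm _).div (hZm _))
  have hY : Measurable (fun ω' (u : Set.Icc (0 : ℝ≥0) t) => Z (↑u) ω' / Z 0 ω') :=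
    measurable_pi_lambda _ (fun v => (hZm _).div (hZm _))
  have hAeq : {ω | (fun u : Set.Icc (0 : ℝ≥0) t => Z (s + ↑u) ω / Z s ω) ∈ B ∧ J (s + t) ω ∈ D}
      = ((fun ω (u : Set.Icc (0 : ℝ≥0) t) => Z (s + ↑u) ω / Z s ω) ⁻¹' B)
        ∩ {ω | J (s + t) ω ∈ D} := Set.setOf_and
  have hBeq : {ω' | (fun u : Set.Icc (0 : ℝ≥0) t => Z (↑u) ω' / Z 0 ω') ∈ B ∧ J t ω' ∈ D}
      = ((fun ω' (u : Set.Icc (0 : ℝ≥0) t) => Z (↑u) ω' / Z 0 ω') ⁻¹' B)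
        ∩ {ω' | J t ω' ∈ D} := Set.setOf_and
  have hAm : MeasurableSet
      {ω | (fun u : Set.Icc (0 : ℝ≥0) t => Z (s + ↑u) ω / Z s ω) ∈ B ∧ J (s + t) ω ∈ D} := by
    rw [hAeq]
    exact (hX hB).inter (hJm _ (hDm D))
  have hgmeas : Measurable (fun ω =>
      ((P (J s ω))
        {ω' | (fun u : Set.Icc (0 : ℝ≥0) t => Z (↑u) ω' / Z 0 ω') ∈ B ∧ J t ω' ∈ D}).toReal) := by
    exact (measurable_of_countable (fun k => ((P k)
      {ω' | (fun u : Set.Icc (0 : ℝ≥0) t => Z (↑u) ω' / Z 0 ω') ∈ B ∧ J t ω' ∈ D}).toReal)).comp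
      (hJm s)
  have hgb : ∀ ω, |((P (J s ω))
      {ω' | (fun u : Set.Icc (0 : ℝ≥0) t => Z (↑u) ω' / Z 0 ω') ∈ B ∧ J t ω' ∈ D}).toReal| ≤ 1 := by
    intro ω
    rw [abs_of_nonneg ENNReal.toReal_nonneg]
    simpa using ENNReal.toReal_mono ENNReal.one_ne_top prob_le_one
  refine (MeasureTheory.ae_eq_condExp_of_forall_setIntegral_eq (hF_le s)
    ((integrable_const (1 : ℝ)).indicator hAm) (fun s' _ _ => ?_) (fun C hC _ => ?_) ?_).symm
  · exact (integrable_bdd hgmeas 1 hgb).integrableOn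
  · -- set integral equality
    have hCg : MeasurableSet C := hF_le s _ hC
    have hlem := lemC hF_le hF_mono hJ_adapted hZ_adapted hZ_ne hP0 hMMP s t D j C hC B hB
    -- RHS : integral of indicator
    have hrhs : ∫ x in C, (Set.indicator
        {ω | (fun u : Set.Icc (0 : ℝ≥0) t => Z (s + ↑u) ω / Z s ω) ∈ B ∧ J (s + t) ω ∈ D}
        (fun _ => (1 : ℝ))) x ∂(P j)
        = (P j ((C ∩ ((fun ω (u : Set.Icc (0 : ℝ≥0) t) => Z (s + ↑u) ω / Z s ω) ⁻¹' B))
            ∩ {ω | J (s + t) ω ∈ D})).toReal := by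
      rw [MeasureTheory.setIntegral_indicator hAm, MeasureTheory.setIntegral_const, smul_eq_mul,
        mul_one]
      congr 1
      rw [hAeq]
      ext ω
      simp only [Set.mem_inter_iff]
      tauto
    rw [hrhs]
    -- LHS
    have hlhs : ∫ x in C, ((P (J s x))
        {ω' | (fun u : Set.Icc (0 : ℝ≥0) t => Z (↑u) ω' / Z 0 ω') ∈ B ∧ J t ω' ∈ D}).toReal ∂(P j)
        = (∫⁻ ω in C, P (J s ω) (((fun ω' (u : Set.Icc (0 : ℝ≥0) t) => Z (↑u) ω' / Z 0 ω') ⁻¹' B)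
            ∩ {ω' | J t ω' ∈ D}) ∂(P j)).toReal := by
      rw [← MeasureTheory.integral_toReal
        (f := fun ω => P (J s ω) (((fun ω' (u : Set.Icc (0 : ℝ≥0) t) => Z (↑u) ω' / Z 0 ω') ⁻¹' B)
            ∩ {ω' | J t ω' ∈ D}))
        (by exact ((measurable_of_countable (fun k => (P k)
          (((fun ω' (u : Set.Icc (0 : ℝ≥0) t) => Z (↑u) ω' / Z 0 ω') ⁻¹' B)
            ∩ {ω' | J t ω' ∈ D}))).comp (hJm s)).aemeasurable)
        (Filter.Eventually.of_forall (fun ω => lt_of_le_of_lt prob_le_one ENNReal.one_lt_top))]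
      refine integral_congr_ae (Filter.Eventually.of_forall fun ω => ?_)
      rw [hBeq]
    rw [hlhs, ← hlem]
  · refine MeasureTheory.StronglyMeasurable.aestronglyMeasurable ?_
    refine Measurable.stronglyMeasurable ?_
    exact (measurable_of_countable (fun k => ((P k)
      {ω' | (fun u : Set.Icc (0 : ℝ≥0) t => Z (↑u) ω' / Z 0 ω') ∈ B ∧ J t ω' ∈ D}).toReal)).comp
      (hJ_adapted s)
end

section
/- Sign changes of a nonvanishing càdlàg function (deterministic lemma implicit in the proof of Theorem 2.4): let f : [0, ∞) → ℝ be a càdlàg function such that f(s) ≠ 0 for all s ≥ 0 and the left limit f(s−) ≠ 0 for all s > 0. Then for every t > 0 the set {s ∈ (0, t] : f(s)/f(s−) < 0} is finite, and moreover sign(f(t)) = sign(f(0)) · (−1)^{N(t)} for every t ≥ 0, where N(t) := #{s ∈ (0, t] : f(s)/f(s−) < 0}. -/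
open scoped NNReal Topology

private lemma aux_sign_eq {x y : ℝ} (h : 0 < x * y) : Real.sign x = Real.sign y := by
  rcases mul_pos_iff.1 h with ⟨hx, hy⟩ | ⟨hx, hy⟩
  · rw [Real.sign_of_pos hx, Real.sign_of_pos hy]
  · rw [Real.sign_of_neg hx, Real.sign_of_neg hy]

private lemma aux_sign_neg {x y : ℝ} (h : x * y < 0) : Real.sign x = -Real.sign y := by
  rcases mul_neg_iff.1 h with ⟨hx, hy⟩ | ⟨hx, hy⟩
  · rw [Real.sign_of_pos hx, Real.sign_of_neg hy]; norm_num
  · rw [Real.sign_of_neg hx, Real.sign_of_pos hy]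

/-- Sign changes of a nonvanishing càdlàg function: the set of sign-change times in `(0,t]`
is finite, and the sign of `f(t)` equals the sign of `f(0)` times `(-1)` to the number of
sign changes up to time `t`. -/
theorem sign_changes_of_cadlag
    (f : ℝ≥0 → ℝ) (fL : ℝ≥0 → ℝ)
    (hright : ∀ s, ContinuousWithinAt f (Set.Ici s) s)
    (hleft : ∀ s, 0 < s → Filter.Tendsto f (nhdsWithin s (Set.Iio s)) (nhds (fL s)))
    (hne : ∀ s, f s ≠ 0)
    (hLne : ∀ s, 0 < s → fL s ≠ 0) :
    (∀ t, 0 < t → {s : ℝ≥0 | s ∈ Set.Ioc 0 t ∧ f s / fL s < 0}.Finite) ∧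
    (∀ t, Real.sign (f t) = Real.sign (f 0) *
      (-1 : ℝ) ^ Set.ncard {s : ℝ≥0 | s ∈ Set.Ioc 0 t ∧ f s / fL s < 0}) := by
  classical
  set T : ℝ≥0 → Set ℝ≥0 := fun t => {s : ℝ≥0 | s ∈ Set.Ioc 0 t ∧ f s / fL s < 0} with hT
  -- from a negative quotient to a negative product
  have hdivmul : ∀ s : ℝ≥0, f s / fL s < 0 → f s * fL s < 0 := by
    intro s hs
    rcases div_neg_iff.1 hs with ⟨h1, h2⟩ | ⟨h1, h2⟩
    · exact mul_neg_iff.2 (Or.inl ⟨h1, h2⟩)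
    · exact mul_neg_iff.2 (Or.inr ⟨h1, h2⟩)
  have hmuldiv : ∀ s : ℝ≥0, f s * fL s < 0 → f s / fL s < 0 := by
    intro s hs
    rcases mul_neg_iff.1 hs with ⟨h1, h2⟩ | ⟨h1, h2⟩
    · exact div_neg_iff.2 (Or.inl ⟨h1, h2⟩)
    · exact div_neg_iff.2 (Or.inr ⟨h1, h2⟩)
  -- left-limit sign: if f has sign of c on a left filter, then fL u has sign of c
  have hLsign : ∀ u : ℝ≥0, 0 < u → ∀ c : ℝ, c ≠ 0 →
      (∀ᶠ v in 𝓝[<] u, 0 < f v * c) → 0 < fL u * c := by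
    intro u hu c hc hev
    haveI : (𝓝[<] u).NeBot := nhdsWithin_Iio_self_neBot' ⟨0, hu⟩
    have ht : Filter.Tendsto (fun v => f v * c) (𝓝[<] u) (𝓝 (fL u * c)) :=
      (hleft u hu).mul_const c
    have h0 : 0 ≤ fL u * c := ge_of_tendsto ht (hev.mono fun v hv => hv.le)
    exact h0.lt_of_ne (Ne.symm (mul_ne_zero (hLne u hu) hc))
  -- combining signs: f u same sign as c and fL u same sign as c gives f u * fL u > 0
  have hcomb : ∀ (x y c : ℝ), 0 < x * c → 0 < y * c → 0 < x * y := by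
    intro x y c h1 h2
    have hc : c ≠ 0 := by rintro rfl; simp at h1
    have hc2 : 0 < c * c := mul_self_pos.mpr hc
    by_contra h
    push_neg at h
    nlinarith [mul_pos h1 h2, mul_nonneg (neg_nonneg.2 h) hc2.le]
  -- right neighborhoods
  have hR : ∀ s : ℝ≥0, ∃ b, s < b ∧ (∀ u ∈ Set.Ico s b, 0 < f u * f s) ∧
      (∀ u ∈ Set.Ioo s b, 0 < f u * fL u) := by
    intro s
    have hpos : 0 < f s * f s := mul_self_pos.mpr (hne s)
    have hev : ∀ᶠ u in 𝓝[≥] s, 0 < f u * f s :=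
      ((hright s).mul_const (f s)).eventually (eventually_gt_nhds hpos)
    rw [Filter.Eventually, mem_nhdsGE_iff_exists_Ico_subset] at hev
    obtain ⟨b, hb, hsub⟩ := hev
    refine ⟨b, hb, fun u hu => hsub hu, ?_⟩
    intro u hu
    have hu0 : 0 < u := lt_of_le_of_lt ((zero_le : (0:ℝ≥0) ≤ s)) hu.1
    have hevL : ∀ᶠ v in 𝓝[<] u, 0 < f v * f s := by
      filter_upwards [Ioo_mem_nhdsLT hu.1] with v hv
      exact hsub ⟨hv.1.le, hv.2.trans hu.2⟩
    have h1 : 0 < f u * f s := hsub ⟨hu.1.le, hu.2⟩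
    have h2 : 0 < fL u * f s := hLsign u hu0 (f s) (hne s) hevL
    exact hcomb _ _ _ h1 h2
  -- left neighborhoods
  have hL : ∀ s : ℝ≥0, 0 < s → ∃ a, a < s ∧ (∀ u ∈ Set.Ioo a s, 0 < f u * fL s) ∧
      (∀ u ∈ Set.Ioo a s, 0 < f u * fL u) := by
    intro s hs
    have hpos : 0 < fL s * fL s := mul_self_pos.mpr (hLne s hs)
    have hev : ∀ᶠ u in 𝓝[<] s, 0 < f u * fL s :=
      ((hleft s hs).mul_const (fL s)).eventually (eventually_gt_nhds hpos)
    rw [Filter.Eventually, mem_nhdsLT_iff_exists_Ioo_subset' hs] at hev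
    obtain ⟨a, ha, hsub⟩ := hev
    refine ⟨a, ha, fun u hu => hsub hu, ?_⟩
    intro u hu
    have hu0 : 0 < u := lt_of_le_of_lt ((zero_le : (0:ℝ≥0) ≤ a)) hu.1
    have hevL : ∀ᶠ v in 𝓝[<] u, 0 < f v * fL s := by
      filter_upwards [Ioo_mem_nhdsLT hu.1] with v hv
      exact hsub ⟨hv.1, hv.2.trans hu.2⟩
    have h1 : 0 < f u * fL s := hsub hu
    have h2 : 0 < fL u * fL s := hLsign u hu0 (fL s) (hLne s hs) hevL
    exact hcomb _ _ _ h1 h2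
  -- local lemma: a neighborhood with no sign change off the center
  have hloc : ∀ s : ℝ≥0, ∃ V ∈ 𝓝 s, ∀ u ∈ V, u ≠ s → 0 < f u * fL u := by
    intro s
    obtain ⟨b, hsb, _, hRgood⟩ := hR s
    rcases eq_or_lt_of_le ((zero_le : (0:ℝ≥0) ≤ s)) with h0 | h0
    · refine ⟨Set.Iio b, Iio_mem_nhds (h0 ▸ hsb), fun u hu hus => ?_⟩
      have : 0 < u := lt_of_le_of_ne ((zero_le : (0:ℝ≥0) ≤ u)) (fun h => hus (h ▸ h0.symm ▸ rfl))
      exact hRgood u ⟨h0 ▸ this, hu⟩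
    · obtain ⟨a, has, _, hLgood⟩ := hL s h0
      refine ⟨Set.Ioo a b, Ioo_mem_nhds has hsb, fun u hu hus => ?_⟩
      rcases lt_or_gt_of_ne hus with h | h
      · exact hLgood u ⟨hu.1, h⟩
      · exact hRgood u ⟨h, hu.2⟩
  -- finiteness for every t
  have hfin : ∀ t : ℝ≥0, (T t).Finite := by
    intro t
    choose V hV hVgood using hloc
    obtain ⟨F, -, hcov⟩ := (isCompact_Icc (a := (0:ℝ≥0)) (b := t)).elim_nhds_subcover V
      (fun x _ => hV x)
    refine Set.Finite.subset F.finite_toSet ?_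
    intro u hu
    have hu' : u ∈ Set.Icc (0:ℝ≥0) t := ⟨(zero_le : (0:ℝ≥0) ≤ u), hu.1.2⟩
    obtain ⟨s, hsF, hus⟩ := Set.mem_iUnion₂.1 (hcov hu')
    by_cases h : u = s
    · exact h ▸ hsF
    · exact absurd (hVgood s u hus h) (not_lt.2 (hdivmul u hu.2).le)
  refine ⟨fun t _ => hfin t, ?_⟩
  -- decomposition of T
  have hTsplit : ∀ u t : ℝ≥0, u ≤ t →
      T t = T u ∪ {s : ℝ≥0 | s ∈ Set.Ioc u t ∧ f s / fL s < 0} := by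
    intro u t hut
    ext s
    simp only [hT, Set.mem_setOf_eq, Set.mem_union, Set.mem_Ioc]
    constructor
    · rintro ⟨⟨h1, h2⟩, h3⟩
      rcases le_or_gt s u with h | h
      · exact Or.inl ⟨⟨h1, h⟩, h3⟩
      · exact Or.inr ⟨⟨h, h2⟩, h3⟩
    · rintro (⟨⟨h1, h2⟩, h3⟩ | ⟨⟨h1, h2⟩, h3⟩)
      · exact ⟨⟨h1, h2.trans hut⟩, h3⟩
      · exact ⟨⟨lt_of_le_of_lt ((zero_le : (0:ℝ≥0) ≤ u)) h1, h2⟩, h3⟩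
  -- the sign formula, by "real induction"
  by_contra hcon
  push_neg at hcon
  set F : Set ℝ≥0 := {t | Real.sign (f t) ≠ Real.sign (f 0) * (-1 : ℝ) ^ (T t).ncard} with hF
  have hFne : F.Nonempty := by
    obtain ⟨t, ht⟩ := hcon
    exact ⟨t, ht⟩
  set m : ℝ≥0 := sInf F with hm
  have hlow : ∀ u, u < m → Real.sign (f u) = Real.sign (f 0) * (-1 : ℝ) ^ (T u).ncard := by
    intro u hu
    by_contra h
    exact absurd (csInf_le (OrderBot.bddBelow F) h) (not_le.2 hu)
  have hP0 : Real.sign (f 0) = Real.sign (f 0) * (-1 : ℝ) ^ (T 0).ncard := by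
    have : T 0 = ∅ := by
      apply Set.eq_empty_iff_forall_notMem.mpr
      rintro s ⟨⟨hs1, hs2⟩, -⟩
      exact absurd hs2 (not_le.2 hs1)
    rw [this]; simp
  -- P m holds
  have hPm : Real.sign (f m) = Real.sign (f 0) * (-1 : ℝ) ^ (T m).ncard := by
    rcases eq_or_lt_of_le ((zero_le : (0:ℝ≥0) ≤ m)) with h0 | h0
    · exact h0 ▸ hP0
    · obtain ⟨a, ham, h1, h2⟩ := hL m h0
      obtain ⟨u0, hau0, hu0m⟩ := exists_between ham
      have hPu0 := hlow u0 hu0m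
      have hTm : T m = T u0 ∪ {s : ℝ≥0 | s ∈ Set.Ioc u0 m ∧ f s / fL s < 0} :=
        hTsplit u0 m hu0m.le
      have hextra : {s : ℝ≥0 | s ∈ Set.Ioc u0 m ∧ f s / fL s < 0} ⊆ {m} := by
        intro s hs
        rcases eq_or_lt_of_le hs.1.2 with h | h
        · exact h
        · exact absurd (h2 s ⟨hau0.trans hs.1.1, h⟩) (not_lt.2 (hdivmul s hs.2).le)
      have hsignL : Real.sign (fL m) = Real.sign (f u0) :=
        (aux_sign_eq (mul_comm (f u0) (fL m) ▸ h1 u0 ⟨hau0, hu0m⟩))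
      by_cases hc : f m / fL m < 0
      · have hTm' : T m = insert m (T u0) := by
          rw [hTm]
          apply Set.Subset.antisymm
          · rintro s (hs | hs)
            · exact Set.mem_insert_of_mem _ hs
            · exact hextra hs ▸ Set.mem_insert _ _
          · rintro s (rfl | hs)
            · exact Or.inr ⟨⟨hu0m, le_refl _⟩, hc⟩
            · exact Or.inl hs
        have hmnot : m ∉ T u0 := by
          intro h
          exact absurd h.1.2 (not_le.2 hu0m)
        rw [hTm', Set.ncard_insert_of_notMem hmnot (hfin u0)]
        have : Real.sign (f m) = -Real.sign (fL m) := aux_sign_neg (hdivmul m hc)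
        rw [this, hsignL, hPu0, pow_succ]
        ring
      · have hTm' : T m = T u0 := by
          rw [hTm]
          apply Set.Subset.antisymm
          · rintro s (hs | hs)
            · exact hs
            · exact absurd (hextra hs ▸ hs.2) hc
          · exact fun s hs => Or.inl hs
        have hpos : 0 < f m * fL m := by
          rcases lt_trichotomy (f m * fL m) 0 with h | h | h
          · exact absurd (hmuldiv m h) hc
          · exact absurd h (mul_ne_zero (hne m) (hLne m h0))
          · exact h
        have : Real.sign (f m) = Real.sign (fL m) := aux_sign_eq hpos
        rw [this, hsignL, hPu0, hTm']
  -- P extends to the right of m, contradiction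
  obtain ⟨b, hmb, g1, g2⟩ := hR m
  have hup : ∀ u ∈ Set.Ico m b,
      Real.sign (f u) = Real.sign (f 0) * (-1 : ℝ) ^ (T u).ncard := by
    intro u hu
    have hTu : T u = T m := by
      rw [hTsplit m u hu.1]
      have : {s : ℝ≥0 | s ∈ Set.Ioc m u ∧ f s / fL s < 0} = ∅ := by
        apply Set.eq_empty_iff_forall_notMem.mpr
        rintro s ⟨⟨hs1, hs2⟩, hs3⟩
        exact absurd (hdivmul s hs3) (not_lt.2 (g2 s ⟨hs1, hs2.trans_lt hu.2⟩).le)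
      rw [this, Set.union_empty]
    have hsgn : Real.sign (f u) = Real.sign (f m) :=
      aux_sign_eq (g1 u hu)
    rw [hsgn, hTu, hPm]
  have hble : b ≤ m := by
    apply le_csInf hFne
    intro t htF
    by_contra hbt
    push_neg at hbt
    have htm : m ≤ t := csInf_le (OrderBot.bddBelow F) htF
    exact htF (hup t ⟨htm, hbt⟩)
  exact absurd hble (not_le.2 hmb)
end

section
/- The multiplicative part of the functionals is an MMP (Lemma 2.5 b)): assume the stochastic functionals (A_{s,t}, B_{s,t})_{0≤s≤t} satisfy (MMGOU1)–(MMGOU5) with respect to the continuous-time Markov process J with countable state space S, and that (A_t, B_t)_{t≥0} has càdlàg paths. Then (A, J) is a Markov multiplicative process with respect to (F_t): for all j ∈ S, all s, t ≥ 0 and all bounded measurable f: ℝ → ℝ, g: S → ℝ, E_j[f(A_{s+t}/A_s) g(J_{s+t}) | F_s] = φ(J_s) holds P_j-almost surely, where φ(m) := E_m[f(A_t) g(J_t)]. -/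
open MeasureTheory ProbabilityTheory
open scoped NNReal Topology

/-- The filtration `F_t = σ(J_u, A_{u,v}, B_{u,v} : 0 ≤ u ≤ v ≤ t)`. -/
def mmgouFilt {Ω S : Type*} [MeasurableSpace S] (J : ℝ≥0 → Ω → S)
    (A B : ℝ≥0 → ℝ≥0 → Ω → ℝ) (t : ℝ≥0) : MeasurableSpace Ω :=
  (⨆ (u : ℝ≥0) (_ : u ≤ t), MeasurableSpace.comap (J u) inferInstance) ⊔
    (⨆ (p : ℝ≥0 × ℝ≥0) (_ : p.1 ≤ p.2 ∧ p.2 ≤ t),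
      MeasurableSpace.comap (fun ω => (A p.1 p.2 ω, B p.1 p.2 ω)) inferInstance)

/-- The σ-algebra generated by `{(A_{s,t}, B_{s,t}) : a ≤ s ≤ t ≤ b}`. -/
def mmgouABSigma {Ω : Type*} (A B : ℝ≥0 → ℝ≥0 → Ω → ℝ) (a b : ℝ≥0) : MeasurableSpace Ω :=
  ⨆ (p : ℝ≥0 × ℝ≥0) (_ : a ≤ p.1 ∧ p.1 ≤ p.2 ∧ p.2 ≤ b),
    MeasurableSpace.comap (fun ω => (A p.1 p.2 ω, B p.1 p.2 ω)) inferInstance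

/-- The multiplicative part of the functionals is an MMP (Lemma 2.5 b)). -/
theorem mmgou_A_is_mmp
    {Ω : Type*} [MeasurableSpace Ω] [StandardBorelSpace Ω]
    {S : Type*} [MeasurableSpace S] [MeasurableSingletonClass S] [Countable S]
    (J : ℝ≥0 → Ω → S) (A B : ℝ≥0 → ℝ≥0 → Ω → ℝ)
    (hJmeas : ∀ t, Measurable (J t))
    (hABmeas : ∀ s t, Measurable fun ω => (A s t ω, B s t ω))
    (P : S → Measure Ω) [∀ j, IsProbabilityMeasure (P j)]
    (hP0 : ∀ j, P j {ω | J 0 ω = j} = 1)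
    (hmJ_le : (⨆ u, MeasurableSpace.comap (J u) inferInstance)
      ≤ (inferInstance : MeasurableSpace Ω))
    -- (MMGOU1) consistency
    (h1 : ∀ (j : S) (s u t : ℝ≥0), s ≤ u → u ≤ t → ∀ᵐ ω ∂(P j),
      A s t ω = A s u ω * A u t ω ∧ B s t ω = A u t ω * B s u ω + B u t ω)
    -- (MMGOU2) conditional independence given σ(J)
    (h2 : ∀ (j : S) (a b c d : ℝ≥0), a ≤ b → b ≤ c → c ≤ d →
      CondIndep (⨆ u, MeasurableSpace.comap (J u) inferInstance)
        (mmgouABSigma A B a b) (mmgouABSigma A B c d) hmJ_le (P j))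
    -- (MMGOU3) conditional stationarity
    (h3 : ∀ (j : S) (s h : ℝ≥0) (C : Set (ℝ × ℝ)) (D : Set S), MeasurableSet C →
      (P j)[(Set.indicator
          {ω | (A s (s + h) ω, B s (s + h) ω) ∈ C ∧ J (s + h) ω ∈ D}
          fun _ => (1 : ℝ)) | mmgouFilt J A B s]
        =ᵐ[P j] fun ω =>
          ((P (J s ω)) {ω' | (A 0 h ω', B 0 h ω') ∈ C ∧ J h ω' ∈ D}).toReal)
    -- (MMGOU4) continuity in probability at 0
    (h4A : ∀ (j : S) (ε : ℝ), 0 < ε →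
      Filter.Tendsto (fun t : ℝ≥0 => P j {ω | ε ≤ |A 0 t ω - 1|}) (𝓝 0) (𝓝 0))
    (h4B : ∀ (j : S) (ε : ℝ), 0 < ε →
      Filter.Tendsto (fun t : ℝ≥0 => P j {ω | ε ≤ |B 0 t ω|}) (𝓝 0) (𝓝 0))
    -- (MMGOU5) non-degeneracy
    (h5 : ∀ (j : S) (t : ℝ≥0), ∀ᵐ ω ∂(P j), A 0 t ω ≠ 0)
    -- càdlàg paths of (A_t, B_t)
    (hcadlag : ∀ ω t, ContinuousWithinAt (fun u => (A 0 u ω, B 0 u ω)) (Set.Ici t) t ∧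
      (0 < t → ∃ l : ℝ × ℝ,
        Filter.Tendsto (fun u => (A 0 u ω, B 0 u ω)) (nhdsWithin t (Set.Iio t)) (nhds l)))
    :
    -- conclusion: (A, J) is a Markov multiplicative process w.r.t. (F_t)
    ∀ (j : S) (s t : ℝ≥0) (f : ℝ → ℝ) (g : S → ℝ),
      Measurable f → (∃ C, ∀ x, |f x| ≤ C) →
      Measurable g → (∃ C, ∀ x, |g x| ≤ C) →
      (P j)[(fun ω => f (A 0 (s + t) ω / A 0 s ω) * g (J (s + t) ω)) | mmgouFilt J A B s]
        =ᵐ[P j] fun ω => ∫ ω', f (A 0 t ω') * g (J t ω') ∂(P (J s ω)) := by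
  intro j s t f g hfm hfB hgm hgB
  obtain ⟨Cf, hCf⟩ := hfB
  obtain ⟨Cg, hCg⟩ := hgB
  have hCf0 : 0 ≤ Cf := le_trans (abs_nonneg _) (hCf 0)
  have hCg0 : 0 ≤ Cg := le_trans (abs_nonneg _) (hCg j)
  have hm : mmgouFilt J A B s ≤ (inferInstance : MeasurableSpace Ω) := by
    refine sup_le ?_ ?_
    · exact iSup₂_le fun u _ => (hJmeas u).comap_le
    · exact iSup₂_le fun p _ => (hABmeas p.1 p.2).comap_le
  have hJs_m : Measurable[mmgouFilt J A B s] (J s) := by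
    rw [measurable_iff_comap_le]
    exact le_sup_of_le_left (le_iSup₂
      (f := fun (u : ℝ≥0) (_ : u ≤ s) => MeasurableSpace.comap (J u) inferInstance) s le_rfl)
  -- Step A: replace the quotient by A_{s,s+t}
  have hae : (fun ω => f (A 0 (s + t) ω / A 0 s ω) * g (J (s + t) ω))
      =ᵐ[(P j)] fun ω => f (A s (s + t) ω) * g (J (s + t) ω) := by
    filter_upwards [h5 j s, h1 j 0 s (s + t) zero_le le_self_add] with ω h0 h1'
    rw [h1'.1, mul_div_cancel_left₀ _ h0]
  refine (condExp_congr_ae hae).trans ?_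
  -- notation
  set T : Ω → (ℝ × ℝ) × S := fun ω => ((A s (s + t) ω, B s (s + t) ω), J (s + t) ω) with hTdef
  set T0 : Ω → (ℝ × ℝ) × S := fun ω => ((A 0 t ω, B 0 t ω), J t ω) with hT0def
  have hT : Measurable T := (hABmeas s (s + t)).prodMk (hJmeas (s + t))
  have hT0 : Measurable T0 := (hABmeas 0 t).prodMk (hJmeas t)
  set κ : S → Measure ((ℝ × ℝ) × S) := fun m' => (P m').map T0 with hκdef
  have hκ_prob : ∀ m', IsProbabilityMeasure (κ m') :=
    fun m' => Measure.isProbabilityMeasure_map (μ := P m') hT0.aemeasurable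
  set H : (ℝ × ℝ) × S → ℝ := fun p => f p.1.1 * g p.2 with hHdef
  have hH : Measurable H :=
    (hfm.comp (measurable_fst.comp measurable_fst)).mul (hgm.comp measurable_snd)
  have hHbd : ∀ p, ‖H p‖ ≤ Cf * Cg := by
    intro p
    simp only [hHdef, Real.norm_eq_abs, abs_mul]
    exact mul_le_mul (hCf _) (hCg _) (abs_nonneg _) hCf0
  set ρ : S → ℝ := fun m' => ∫ p, H p ∂(κ m') with hρdef
  have hρ_eq : ∀ m', ρ m' = ∫ ω', f (A 0 t ω') * g (J t ω') ∂(P m') := by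
    intro m'
    exact integral_map hT0.aemeasurable hH.aestronglyMeasurable
  have hρbd : ∀ m', |ρ m'| ≤ Cf * Cg := by
    intro m'
    haveI := hκ_prob m'
    calc |ρ m'| ≤ (Cf * Cg) * ((κ m') Set.univ).toReal :=
          norm_integral_le_of_norm_le_const (ae_of_all _ hHbd)
      _ = Cf * Cg := by simp
  -- the target function equals ρ ∘ J s
  have htarget : (fun ω => ∫ ω', f (A 0 t ω') * g (J t ω') ∂(P (J s ω)))
      = fun ω => ρ (J s ω) := by
    funext ω; rw [hρ_eq]
  rw [htarget]
  -- now characterize the conditional expectation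
  refine (ae_eq_condExp_of_forall_setIntegral_eq hm ?hint ?hint2 ?heq ?hmeas).symm
  case hint =>
    refine (integrable_const (Cf * Cg)).mono' ((hH.comp hT).aestronglyMeasurable) ?_
    exact ae_of_all _ fun ω => hHbd (T ω)
  case hint2 =>
    intro E hE hEfin
    refine (integrable_const (Cf * Cg)).mono'
      ((measurable_of_countable ρ).comp (hJmeas s)).aestronglyMeasurable.restrict ?_
    exact ae_of_all _ fun ω => by simpa using hρbd (J s ω)
  case hmeas =>
    exact StronglyMeasurable.aestronglyMeasurable
      ((measurable_of_countable ρ).comp hJs_m).stronglyMeasurable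
  case heq =>
    intro E hE _
    have hE' : MeasurableSet E := hm E hE
    -- helper: integrals over E of functions of J s
    have hmapJ_fin : IsFiniteMeasure (((P j).restrict E).map (J s)) := by
      constructor
      rw [Measure.map_apply (hJmeas s) MeasurableSet.univ]
      exact measure_lt_top _ _
    have hInt_comp : ∀ (θ : S → ℝ) (c : ℝ), (∀ m', |θ m'| ≤ c) →
        ∫ x in E, θ (J s x) ∂(P j) = ∑' m', (((P j) (E ∩ J s ⁻¹' {m'})).toReal) * θ m' := by
      intro θ c hc
      haveI := hmapJ_fin
      have hθm : Measurable θ := measurable_of_countable θ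
      have hθint : Integrable θ (((P j).restrict E).map (J s)) :=
        (integrable_const c).mono' hθm.aestronglyMeasurable
          (ae_of_all _ fun m' => by simpa using hc m')
      rw [← integral_map (hJmeas s).aemeasurable hθm.aestronglyMeasurable,
        integral_countable' hθint]
      exact tsum_congr fun m' => by
        rw [measureReal_def, Measure.map_apply (hJmeas s) (measurableSet_singleton m'),
          Measure.restrict_apply (hJmeas s (measurableSet_singleton m')),
          Set.inter_comm, smul_eq_mul]
    -- the two measures on (ℝ × ℝ) × S
    set ν₁ : Measure ((ℝ × ℝ) × S) := ((P j).restrict E).map T with hν₁def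
    set ν₂ : Measure ((ℝ × ℝ) × S) :=
      Measure.sum (fun m' : S => (P j) (E ∩ J s ⁻¹' {m'}) • κ m') with hν₂def
    haveI hν₁fin : IsFiniteMeasure ν₁ := by
      constructor
      rw [hν₁def, Measure.map_apply hT MeasurableSet.univ]
      exact measure_lt_top _ _
    have hsum_part : ∑' m' : S, (P j) (E ∩ J s ⁻¹' {m'}) = (P j) E := by
      rw [← measure_iUnion ?_ (fun m' => hE'.inter (hJmeas s (measurableSet_singleton m')))]
      · congr 1
        ext ω
        simp
      · intro a b hab
        refine Set.disjoint_left.mpr fun ω ha hb => hab ?_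
        have : J s ω = a := ha.2
        have hb' : J s ω = b := hb.2
        rw [← this, hb']
    have hν₂univ : ν₂ Set.univ = (P j) E := by
      rw [hν₂def, Measure.sum_apply _ MeasurableSet.univ, ← hsum_part]
      refine tsum_congr fun m' => ?_
      haveI := hκ_prob m'
      simp [Measure.smul_apply]
    haveI hν₂fin : IsFiniteMeasure ν₂ := by
      constructor
      rw [hν₂univ]
      exact measure_lt_top _ _
    -- rectangle values agree, via (MMGOU3)
    have hrect : ∀ (C : Set (ℝ × ℝ)) (D : Set S), MeasurableSet C →
        ν₁ (C ×ˢ D) = ν₂ (C ×ˢ D) := by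
      intro C D hC
      have hD : MeasurableSet D := D.to_countable.measurableSet
      have hCD : MeasurableSet (C ×ˢ D) := hC.prod hD
      have hTset : T ⁻¹' (C ×ˢ D)
          = {ω | (A s (s + t) ω, B s (s + t) ω) ∈ C ∧ J (s + t) ω ∈ D} := rfl
      have hT0set : ∀ m', (P m') {ω' | (A 0 t ω', B 0 t ω') ∈ C ∧ J t ω' ∈ D}
          = κ m' (C ×ˢ D) := by
        intro m'
        rw [hκdef, Measure.map_apply hT0 hCD]
        rfl
      have hind : Integrable (Set.indicator
          {ω | (A s (s + t) ω, B s (s + t) ω) ∈ C ∧ J (s + t) ω ∈ D}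
          fun _ => (1 : ℝ)) (P j) := by
        refine (integrable_const (1 : ℝ)).indicator ?_
        rw [← hTset]
        exact hT hCD
      -- set-integral identity from h3
      have h3' := h3 j s t C D hC
      have hI1 : ∫ x in E, ((P (J s x))
          {ω' | (A 0 t ω', B 0 t ω') ∈ C ∧ J t ω' ∈ D}).toReal ∂(P j)
          = (ν₁ (C ×ˢ D)).toReal := by
        rw [← setIntegral_congr_ae hE' (h3'.mono fun x hx _ => hx)]
        rw [setIntegral_condExp hm hind hE]
        rw [integral_indicator (by rw [← hTset]; exact hT hCD)]
        rw [Measure.restrict_restrict (by rw [← hTset]; exact hT hCD)]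
        rw [hν₁def, Measure.map_apply hT hCD, Measure.restrict_apply (hT hCD), hTset]
        simp [measureReal_def]
      have hI2 : ∫ x in E, ((P (J s x))
          {ω' | (A 0 t ω', B 0 t ω') ∈ C ∧ J t ω' ∈ D}).toReal ∂(P j)
          = (ν₂ (C ×ˢ D)).toReal := by
        have hb : ∀ m', |((κ m') (C ×ˢ D)).toReal| ≤ 1 := by
          intro m'
          haveI := hκ_prob m'
          rw [abs_of_nonneg ENNReal.toReal_nonneg]
          exact ENNReal.toReal_le_of_le_ofReal zero_le_one (by simpa using prob_le_one)
        calc ∫ x in E, ((P (J s x))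
              {ω' | (A 0 t ω', B 0 t ω') ∈ C ∧ J t ω' ∈ D}).toReal ∂(P j)
            = ∫ x in E, ((κ (J s x)) (C ×ˢ D)).toReal ∂(P j) := by
              simp only [hT0set]
          _ = ∑' m', ((P j) (E ∩ J s ⁻¹' {m'})).toReal * ((κ m') (C ×ˢ D)).toReal :=
              hInt_comp (fun m' => ((κ m') (C ×ˢ D)).toReal) 1 hb
          _ = (ν₂ (C ×ˢ D)).toReal := by
              rw [hν₂def, Measure.sum_apply _ hCD,
                ENNReal.tsum_toReal_eq
                  (f := fun m' => ((P j) (E ∩ J s ⁻¹' {m'}) • κ m') (C ×ˢ D))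
                  (fun m' => by
                    haveI := hκ_prob m'
                    simp only [Measure.smul_apply, smul_eq_mul]
                    exact ENNReal.mul_ne_top (measure_ne_top _ _) (measure_ne_top _ _))]
              exact tsum_congr fun m' => by
                rw [Measure.smul_apply, smul_eq_mul, ENNReal.toReal_mul]
      have := hI1.symm.trans hI2
      exact (ENNReal.toReal_eq_toReal_iff' (measure_ne_top _ _) (measure_ne_top _ _)).mp this
    -- the two measures agree
    have hνeq : ν₁ = ν₂ := by
      refine ext_of_generate_finite _ generateFrom_prod.symm isPiSystem_prod ?_ ?_
      · rintro _ ⟨C, hC, D, hD, rfl⟩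
        exact hrect C D hC
      · rw [← Set.univ_prod_univ]
        exact hrect _ _ MeasurableSet.univ
    -- conclude
    have hLHS : ∫ x in E, f (A s (s + t) x) * g (J (s + t) x) ∂(P j) = ∫ p, H p ∂ν₁ := by
      rw [hν₁def, integral_map hT.aemeasurable hH.aestronglyMeasurable]
    have hRHS : ∫ p, H p ∂ν₂ = ∫ x in E, ρ (J s x) ∂(P j) := by
      have hHint : Integrable H ν₂ :=
        (integrable_const (Cf * Cg)).mono' hH.aestronglyMeasurable (ae_of_all _ hHbd)
      rw [hν₂def, integral_sum_measure (by rwa [← hν₂def]),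
        hInt_comp ρ (Cf * Cg) hρbd]
      exact tsum_congr fun m' => by
        rw [integral_smul_measure, smul_eq_mul, hρdef]
    rw [hLHS, hνeq, hRHS]
  done
end

section
/- Markov property of the Markov-modulated generalized Ornstein-Uhlenbeck pair (claim used in the proof of Theorem 3.3): assume the stochastic functionals (A_{s,t}, B_{s,t})_{0≤s≤t} satisfy (MMGOU1)–(MMGOU5) with respect to the continuous-time Markov process J with countable state space S, and that (A_t, B_t)_{t≥0} has càdlàg paths. Let V_0 be a real random variable such that under each P_j the variable V_0 is independent of σ(J_u, A_{u,v}, B_{u,v} : 0 ≤ u ≤ v < ∞), and define V_t := A_t V_0 + B_t for t ≥ 0 and G_t := F_t ∨ σ(V_0). Then (V_t, J_t)_{t≥0} is a time-homogeneous Markov process with respect to (G_t): for all j ∈ S, all s, t ≥ 0 and every bounded measurable f : ℝ × S → ℝ, E_j[f(V_{s+t}, J_{s+t}) | G_s] = g_{f,t}(V_s, J_s) holds P_j-almost surely, where g_{f,t}(v, m) := E_m[f(A_t v + B_t, J_t)]. -/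
open MeasureTheory ProbabilityTheory
open scoped NNReal Topology ENNReal

lemma aux_integrable_of_bdd {α : Type*} [MeasurableSpace α] {μ : Measure α} [IsFiniteMeasure μ]
    {f : α → ℝ} (hf : AEStronglyMeasurable f μ) {C : ℝ} (h : ∀ x, |f x| ≤ C) :
    Integrable f μ :=
  Integrable.mono' (integrable_const C) hf
    (Filter.Eventually.of_forall fun x => by simpa [Real.norm_eq_abs] using h x)

lemma aux_generateFrom_rect {α β γ : Type*} [MeasurableSpace α] [MeasurableSpace β]
    [MeasurableSpace γ] :
    (inferInstance : MeasurableSpace (α × β × γ)) =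
      MeasurableSpace.generateFrom
        (Set.image2 (· ×ˢ ·) {U : Set α | MeasurableSet U}
          (Set.image2 (· ×ˢ ·) {C : Set β | MeasurableSet C} {D : Set γ | MeasurableSet D})) := by
  have hspan2 : IsCountablySpanning
      (Set.image2 (· ×ˢ ·) {C : Set β | MeasurableSet C} {D : Set γ | MeasurableSet D}) :=
    ⟨fun _ => Set.univ ×ˢ Set.univ,
      fun _ => Set.mem_image2_of_mem MeasurableSet.univ MeasurableSet.univ, by simp [Set.univ_prod_univ, Set.iUnion_const]⟩
  have h := generateFrom_prod_eq (α := α) (β := β × γ)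
    isCountablySpanning_measurableSet hspan2
  rw [MeasurableSpace.generateFrom_measurableSet, generateFrom_prod] at h
  exact h

lemma aux_key {Ω : Type*} [MeasurableSpace Ω] {S : Type*} [MeasurableSpace S]
    [MeasurableSingletonClass S] [Countable S]
    (μ : Measure Ω) [IsProbabilityMeasure μ]
    (Y : Ω → ℝ) (W : Ω → (ℝ × ℝ) × S) (Js : Ω → S) (κ : S → Measure ((ℝ × ℝ) × S))
    [hκp : ∀ m, IsProbabilityMeasure (κ m)]
    (hY : Measurable Y) (hW : Measurable W) (hJs : Measurable Js)
    (S1 : Set Ω) (hS1 : MeasurableSet S1)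
    (hbase : ∀ (U : Set ℝ) (C : Set (ℝ × ℝ)) (D : Set S), MeasurableSet U → MeasurableSet C →
      μ (S1 ∩ Y ⁻¹' U ∩ W ⁻¹' (C ×ˢ D)) = ∫⁻ ω in S1 ∩ Y ⁻¹' U, κ (Js ω) (C ×ˢ D) ∂μ)
    (g : ℝ → (ℝ × ℝ) × S → ℝ) (hg : Measurable fun p : ℝ × ((ℝ × ℝ) × S) => g p.1 p.2)
    {Cg : ℝ} (hCg : ∀ u w, |g u w| ≤ Cg) :
    ∫ ω in S1, g (Y ω) (W ω) ∂μ = ∫ ω in S1, ∫ w, g (Y ω) w ∂κ (Js ω) ∂μ := by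
  classical
  set ν := μ.restrict S1 with hν
  have hpair : Measurable fun ω => (Y ω, W ω) := hY.prodMk hW
  set F : Ω → Measure (ℝ × ((ℝ × ℝ) × S)) := fun ω => (κ (Js ω)).map (Prod.mk (Y ω)) with hF
  have hFmeas : Measurable F := by
    apply Measure.measurable_of_measurable_coe
    intro E hE
    have heq : (fun ω => F ω E)
        = (fun p : ℝ × S => κ p.2 (Prod.mk p.1 ⁻¹' E)) ∘ (fun ω => (Y ω, Js ω)) := by
      funext ω
      simp only [hF, Function.comp_apply]
      rw [Measure.map_apply measurable_prodMk_left hE]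
    rw [heq]
    refine (measurable_from_prod_countable_left (fun m => ?_)).comp (hY.prodMk hJs)
    show Measurable fun y : ℝ => κ m (Prod.mk y ⁻¹' E)
    exact measurable_measure_prodMk_left hE
  -- the two measures agree
  haveI : IsFiniteMeasure (ν.map fun ω => (Y ω, W ω)) := by
    constructor
    rw [Measure.map_apply hpair MeasurableSet.univ]
    exact lt_of_le_of_lt (measure_mono (Set.subset_univ _)) (measure_lt_top ν _)
  have hμeq : ν.map (fun ω => (Y ω, W ω)) = ν.bind F := by
    refine MeasureTheory.ext_of_generate_finite _ aux_generateFrom_rect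
      (IsPiSystem.prod MeasurableSpace.isPiSystem_measurableSet
        (IsPiSystem.prod MeasurableSpace.isPiSystem_measurableSet MeasurableSpace.isPiSystem_measurableSet)) ?_ ?_
    · rintro R hR
      obtain ⟨U, hU, E, hE2, rfl⟩ := hR
      obtain ⟨C, hC, D, hD, rfl⟩ := hE2
      simp only [Set.mem_setOf_eq] at hU hC hD
      have hCD : MeasurableSet (C ×ˢ D) := hC.prod hD
      have hRmeas : MeasurableSet (U ×ˢ (C ×ˢ D)) := hU.prod hCD
      have hpre : (fun ω => (Y ω, W ω)) ⁻¹' (U ×ˢ (C ×ˢ D)) = Y ⁻¹' U ∩ W ⁻¹' (C ×ˢ D) := rfl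
      rw [Measure.map_apply hpair hRmeas, hpre, hν,
        Measure.restrict_apply ((hY hU).inter (hW hCD))]
      have hset : (Y ⁻¹' U ∩ W ⁻¹' (C ×ˢ D)) ∩ S1 = S1 ∩ Y ⁻¹' U ∩ W ⁻¹' (C ×ˢ D) := by
        rw [Set.inter_comm, ← Set.inter_assoc]
      rw [hset, hbase U C D hU hC,
        Measure.bind_apply hRmeas hFmeas.aemeasurable]
      have hptw : ∀ ω, F ω (U ×ˢ (C ×ˢ D))
          = (Y ⁻¹' U).indicator (fun ω' => κ (Js ω') (C ×ˢ D)) ω := by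
        intro ω
        simp only [hF]
        rw [Measure.map_apply measurable_prodMk_left hRmeas,
          Set.mk_preimage_prod_right_eq_if]
        by_cases h : Y ω ∈ U <;> simp [h, Set.indicator_apply]
      calc ∫⁻ ω in S1 ∩ Y ⁻¹' U, κ (Js ω) (C ×ˢ D) ∂μ
          = ∫⁻ ω in Y ⁻¹' U ∩ S1, κ (Js ω) (C ×ˢ D) ∂μ := by rw [Set.inter_comm]
        _ = ∫⁻ ω in Y ⁻¹' U, κ (Js ω) (C ×ˢ D) ∂ν := by
            rw [hν, Measure.restrict_restrict (hY hU)]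
        _ = ∫⁻ ω, (Y ⁻¹' U).indicator (fun ω' => κ (Js ω') (C ×ˢ D)) ω ∂ν := by
            rw [lintegral_indicator (hY hU)]
        _ = ∫⁻ ω, F ω (U ×ˢ (C ×ˢ D)) ∂ν := by
            refine lintegral_congr fun ω => (hptw ω).symm
    · rw [Measure.map_apply hpair MeasurableSet.univ, Set.preimage_univ,
        Measure.bind_apply MeasurableSet.univ hFmeas.aemeasurable]
      have : ∀ ω, F ω Set.univ = 1 := by
        intro ω
        simp only [hF]
        rw [Measure.map_apply measurable_prodMk_left MeasurableSet.univ, Set.preimage_univ]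
        exact (hκp (Js ω)).measure_univ
      simp only [this]
      rw [lintegral_one]
  -- nonneg bounded case
  have main_nonneg : ∀ (G : ℝ × ((ℝ × ℝ) × S) → ℝ) (M : ℝ), Measurable G → (∀ p, 0 ≤ G p) →
      (∀ p, G p ≤ M) →
      ∫ ω in S1, G (Y ω, W ω) ∂μ = ∫ ω in S1, ∫ w, G (Y ω, w) ∂κ (Js ω) ∂μ := by
    intro G M hG hG0 hGM
    set Ge : ℝ × ((ℝ × ℝ) × S) → ℝ≥0∞ := fun p => ENNReal.ofReal (G p) with hGe
    have hGemeas : Measurable Ge := hG.ennreal_ofReal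
    set L : Ω → ℝ≥0∞ := fun ω => ∫⁻ w, Ge (Y ω, w) ∂κ (Js ω) with hL
    have hLmeas : Measurable L := by
      have : L = (fun q : ℝ × S => ∫⁻ w, Ge (q.1, w) ∂κ q.2) ∘ (fun ω => (Y ω, Js ω)) := rfl
      rw [this]
      exact (measurable_from_prod_countable_left (fun m =>
        (Measurable.lintegral_prod_right' (f := fun p : ℝ × ((ℝ × ℝ) × S) => Ge p)
          hGemeas : Measurable fun y : ℝ => ∫⁻ w, Ge (y, w) ∂κ m))).comp (hY.prodMk hJs)
    have hLle : ∀ ω, L ω ≤ ENNReal.ofReal M := by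
      intro ω
      calc L ω ≤ ∫⁻ _, ENNReal.ofReal M ∂κ (Js ω) :=
            lintegral_mono fun w => ENNReal.ofReal_le_ofReal (hGM _)
        _ = ENNReal.ofReal M := by
            rw [lintegral_const, (hκp (Js ω)).measure_univ, mul_one]
    have hLHS : ∫ ω in S1, G (Y ω, W ω) ∂μ = (∫⁻ ω, L ω ∂ν).toReal := by
      rw [integral_eq_lintegral_of_nonneg_ae (Filter.Eventually.of_forall fun ω => hG0 _)
        ((hG.comp hpair).aestronglyMeasurable)]
      congr 1
      calc ∫⁻ ω, ENNReal.ofReal (G (Y ω, W ω)) ∂ν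
          = ∫⁻ p, Ge p ∂(ν.map fun ω => (Y ω, W ω)) := (lintegral_map hGemeas hpair).symm
        _ = ∫⁻ p, Ge p ∂(ν.bind F) := by rw [hμeq]
        _ = ∫⁻ ω, ∫⁻ p, Ge p ∂F ω ∂ν := Measure.lintegral_bind hFmeas.aemeasurable hGemeas.aemeasurable
        _ = ∫⁻ ω, L ω ∂ν := by
            refine lintegral_congr fun ω => ?_
            simp only [hF]
            rw [lintegral_map hGemeas measurable_prodMk_left]
    have hRHS : ∫ ω in S1, ∫ w, G (Y ω, w) ∂κ (Js ω) ∂μ = (∫⁻ ω, L ω ∂ν).toReal := by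
      have hinner : ∀ ω, ∫ w, G (Y ω, w) ∂κ (Js ω) = (L ω).toReal := by
        intro ω
        rw [integral_eq_lintegral_of_nonneg_ae (Filter.Eventually.of_forall fun w => hG0 _)
          ((hG.comp measurable_prodMk_left).aestronglyMeasurable)]
      calc ∫ ω in S1, ∫ w, G (Y ω, w) ∂κ (Js ω) ∂μ
          = ∫ ω, (L ω).toReal ∂ν := by
            rw [hν]; exact setIntegral_congr_ae hS1
              (Filter.Eventually.of_forall fun ω _ => hinner ω)
        _ = (∫⁻ ω, L ω ∂ν).toReal := by
            refine integral_toReal (hLmeas.aemeasurable) ?_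
            exact Filter.Eventually.of_forall fun ω =>
              lt_of_le_of_lt (hLle ω) ENNReal.ofReal_lt_top
    rw [hLHS, hRHS]
  -- reduce general case to nonneg case
  set M : ℝ := max Cg 0 with hM
  have hCgM : ∀ u w, |g u w| ≤ M := fun u w => (hCg u w).trans (le_max_left _ _)
  have hGen := main_nonneg (fun p => g p.1 p.2 + M) (2 * M)
    (hg.add measurable_const)
    (fun p => by
      show 0 ≤ g p.1 p.2 + M
      have := (abs_le.1 (hCgM p.1 p.2)).1; linarith)
    (fun p => by
      show g p.1 p.2 + M ≤ 2 * M
      have := (abs_le.1 (hCgM p.1 p.2)).2; linarith)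
  have hκint : ∀ ω, Integrable (fun w => g (Y ω) w) (κ (Js ω)) := fun ω =>
    aux_integrable_of_bdd
      ((hg.comp measurable_prodMk_left).aestronglyMeasurable)
      (fun w => hCgM _ w)
  have hΦ : Measurable fun q : ℝ × S => ∫ w, g q.1 w ∂κ q.2 := by
    refine measurable_from_prod_countable_left fun m => ?_
    show Measurable fun u : ℝ => ∫ w, g u w ∂κ m
    exact (MeasureTheory.StronglyMeasurable.integral_prod_right' (ν := κ m)
      (hg.stronglyMeasurable)).measurable
  have hΦbdd : ∀ (u : ℝ) (m : S), |∫ w, g u w ∂κ m| ≤ M := by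
    intro u m
    calc |∫ w, g u w ∂κ m| ≤ M * ((κ m) Set.univ).toReal := by
          simpa [Real.norm_eq_abs] using
            norm_integral_le_of_norm_le_const (μ := κ m) (f := fun w => g u w)
              (Filter.Eventually.of_forall fun w => by
                simpa [Real.norm_eq_abs] using hCgM u w)
      _ = M := by rw [(hκp m).measure_univ]; simp
  have hint1 : Integrable (fun ω => g (Y ω) (W ω)) ν :=
    aux_integrable_of_bdd ((hg.comp hpair).aestronglyMeasurable) (fun ω => hCgM _ _)
  have hint2 : Integrable (fun ω => ∫ w, g (Y ω) w ∂κ (Js ω)) ν := by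
    refine aux_integrable_of_bdd ?_ (fun ω => hΦbdd (Y ω) (Js ω))
    exact ((hΦ.comp (hY.prodMk hJs)).aestronglyMeasurable)
  have hL' : ∫ ω in S1, (g (Y ω) (W ω) + M) ∂μ
      = ∫ ω in S1, g (Y ω) (W ω) ∂μ + M * (μ S1).toReal := by
    rw [integral_add hint1 (integrable_const M)]
    rw [setIntegral_const]
    simp [mul_comm, Measure.real, hν]
  have hR' : ∫ ω in S1, ∫ w, (g (Y ω) w + M) ∂κ (Js ω) ∂μ
      = ∫ ω in S1, ∫ w, g (Y ω) w ∂κ (Js ω) ∂μ + M * (μ S1).toReal := by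
    have hinner : ∀ ω, ∫ w, (g (Y ω) w + M) ∂κ (Js ω)
        = (∫ w, g (Y ω) w ∂κ (Js ω)) + M := by
      intro ω
      rw [integral_add (hκint ω) (integrable_const M), integral_const]
      simp
    calc ∫ ω in S1, ∫ w, (g (Y ω) w + M) ∂κ (Js ω) ∂μ
        = ∫ ω in S1, ((∫ w, g (Y ω) w ∂κ (Js ω)) + M) ∂μ :=
          setIntegral_congr_ae hS1 (Filter.Eventually.of_forall fun ω _ => hinner ω)
      _ = ∫ ω in S1, ∫ w, g (Y ω) w ∂κ (Js ω) ∂μ + M * (μ S1).toReal := by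
          rw [integral_add hint2 (integrable_const M), setIntegral_const]
          simp [mul_comm, Measure.real, hν]
  have := hGen
  simp only at this
  rw [hL', hR'] at this
  linarith

lemma aux_indep_fubini {Ω β : Type*} [MeasurableSpace Ω] [MeasurableSpace β]
    (μ : Measure Ω) [IsProbabilityMeasure μ] (V : Ω → ℝ) (Z : Ω → β)
    (hV : Measurable V) (hZ : Measurable Z) (hindep : IndepFun V Z μ)
    (Ψ₁ Ψ₂ : ℝ × β → ℝ) (hm₁ : Measurable Ψ₁) (hm₂ : Measurable Ψ₂)
    {C : ℝ} (hb₁ : ∀ x, |Ψ₁ x| ≤ C) (hb₂ : ∀ x, |Ψ₂ x| ≤ C)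
    (hkey : ∀ v : ℝ, ∫ ω, Ψ₁ (v, Z ω) ∂μ = ∫ ω, Ψ₂ (v, Z ω) ∂μ) :
    ∫ ω, Ψ₁ (V ω, Z ω) ∂μ = ∫ ω, Ψ₂ (V ω, Z ω) ∂μ := by
  have hmap := (indepFun_iff_map_prod_eq_prod_map_map hV.aemeasurable hZ.aemeasurable).mp hindep
  haveI : IsProbabilityMeasure (μ.map V) := Measure.isProbabilityMeasure_map hV.aemeasurable
  haveI : IsProbabilityMeasure (μ.map Z) := Measure.isProbabilityMeasure_map hZ.aemeasurable
  have comp : ∀ (Ψ : ℝ × β → ℝ), Measurable Ψ → (∀ x, |Ψ x| ≤ C) →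
      ∫ ω, Ψ (V ω, Z ω) ∂μ = ∫ v, ∫ z, Ψ (v, z) ∂(μ.map Z) ∂(μ.map V) := by
    intro Ψ hm hb
    rw [← integral_map (hV.prodMk hZ).aemeasurable hm.aestronglyMeasurable, hmap,
      integral_prod _ (aux_integrable_of_bdd hm.aestronglyMeasurable hb)]
  rw [comp Ψ₁ hm₁ hb₁, comp Ψ₂ hm₂ hb₂]
  refine integral_congr_ae (Filter.Eventually.of_forall fun v => ?_)
  have e1 : ∫ z, Ψ₁ (v, z) ∂(μ.map Z) = ∫ ω, Ψ₁ (v, Z ω) ∂μ :=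
    integral_map hZ.aemeasurable (hm₁.comp measurable_prodMk_left).aestronglyMeasurable
  have e2 : ∫ z, Ψ₂ (v, z) ∂(μ.map Z) = ∫ ω, Ψ₂ (v, Z ω) ∂μ :=
    integral_map hZ.aemeasurable (hm₂.comp measurable_prodMk_left).aestronglyMeasurable
  show ∫ z, Ψ₁ (v, z) ∂(μ.map Z) = ∫ z, Ψ₂ (v, z) ∂(μ.map Z)
  rw [e1, e2]
  exact hkey v


open MeasureTheory ProbabilityTheory
open scoped NNReal Topology

/-- Markov property of the MMGOU pair (V, J) (claim used in the proof of Theorem 3.3). -/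
theorem mmgou_markov_property
    {Ω : Type*} [MeasurableSpace Ω] [StandardBorelSpace Ω]
    {S : Type*} [MeasurableSpace S] [MeasurableSingletonClass S] [Countable S]
    (J : ℝ≥0 → Ω → S) (A B : ℝ≥0 → ℝ≥0 → Ω → ℝ)
    (hJmeas : ∀ t, Measurable (J t))
    (hABmeas : ∀ s t, Measurable fun ω => (A s t ω, B s t ω))
    (P : S → Measure Ω) [∀ j, IsProbabilityMeasure (P j)]
    (hP0 : ∀ j, P j {ω | J 0 ω = j} = 1)
    (hmJ_le : (⨆ u, MeasurableSpace.comap (J u) inferInstance)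
      ≤ (inferInstance : MeasurableSpace Ω))
    -- (MMGOU1) consistency
    (h1 : ∀ (j : S) (s u t : ℝ≥0), s ≤ u → u ≤ t → ∀ᵐ ω ∂(P j),
      A s t ω = A s u ω * A u t ω ∧ B s t ω = A u t ω * B s u ω + B u t ω)
    -- (MMGOU2) conditional independence given σ(J)
    (h2 : ∀ (j : S) (a b c d : ℝ≥0), a ≤ b → b ≤ c → c ≤ d →
      CondIndep (⨆ u, MeasurableSpace.comap (J u) inferInstance)
        (mmgouABSigma A B a b) (mmgouABSigma A B c d) hmJ_le (P j))
    -- (MMGOU3) conditional stationarity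
    (h3 : ∀ (j : S) (s h : ℝ≥0) (C : Set (ℝ × ℝ)) (D : Set S), MeasurableSet C →
      (P j)[(Set.indicator
          {ω | (A s (s + h) ω, B s (s + h) ω) ∈ C ∧ J (s + h) ω ∈ D}
          fun _ => (1 : ℝ)) | mmgouFilt J A B s]
        =ᵐ[P j] fun ω =>
          ((P (J s ω)) {ω' | (A 0 h ω', B 0 h ω') ∈ C ∧ J h ω' ∈ D}).toReal)
    -- (MMGOU4) continuity in probability at 0
    (h4A : ∀ (j : S) (ε : ℝ), 0 < ε →
      Filter.Tendsto (fun t : ℝ≥0 => P j {ω | ε ≤ |A 0 t ω - 1|}) (𝓝 0) (𝓝 0))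
    (h4B : ∀ (j : S) (ε : ℝ), 0 < ε →
      Filter.Tendsto (fun t : ℝ≥0 => P j {ω | ε ≤ |B 0 t ω|}) (𝓝 0) (𝓝 0))
    -- (MMGOU5) non-degeneracy
    (h5 : ∀ (j : S) (t : ℝ≥0), ∀ᵐ ω ∂(P j), A 0 t ω ≠ 0)
    -- càdlàg paths of (A_t, B_t)
    (hcadlag : ∀ ω t, ContinuousWithinAt (fun u => (A 0 u ω, B 0 u ω)) (Set.Ici t) t ∧
      (0 < t → ∃ l : ℝ × ℝ,
        Filter.Tendsto (fun u => (A 0 u ω, B 0 u ω)) (nhdsWithin t (Set.Iio t)) (nhds l)))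
    -- the initial value V₀
    (V0 : Ω → ℝ) (hV0meas : Measurable V0)
    -- V₀ is independent of σ(J_u, A_{u,v}, B_{u,v} : 0 ≤ u ≤ v < ∞) under each P_j
    (hV0indep : ∀ j : S,
      Indep (MeasurableSpace.comap V0 inferInstance)
        ((⨆ u, MeasurableSpace.comap (J u) inferInstance) ⊔
          (⨆ (p : ℝ≥0 × ℝ≥0) (_ : p.1 ≤ p.2),
            MeasurableSpace.comap (fun ω => (A p.1 p.2 ω, B p.1 p.2 ω)) inferInstance))
        (P j)) :
    -- conclusion: (V_t, J_t) with V_t = A_t V₀ + B_t is a time-homogeneous Markov process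
    -- with respect to G_t = F_t ∨ σ(V₀)
    ∀ (j : S) (s t : ℝ≥0) (f : ℝ × S → ℝ),
      Measurable f → (∃ C, ∀ x, |f x| ≤ C) →
      (P j)[(fun ω => f (A 0 (s + t) ω * V0 ω + B 0 (s + t) ω, J (s + t) ω))
          | mmgouFilt J A B s ⊔ MeasurableSpace.comap V0 inferInstance]
        =ᵐ[P j] fun ω =>
          ∫ ω', f (A 0 t ω' * (A 0 s ω * V0 ω + B 0 s ω) + B 0 t ω', J t ω')
            ∂(P (J s ω)) := by
  intro j s t f hfmeas hfbdd
  obtain ⟨Cf, hCf⟩ := hfbdd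
  classical
  have hA0meas : ∀ (u v : ℝ≥0), Measurable (A u v) := fun u v => measurable_fst.comp (hABmeas u v)
  have hB0meas : ∀ (u v : ℝ≥0), Measurable (B u v) := fun u v => measurable_snd.comp (hABmeas u v)
  have hCf0 : 0 ≤ Cf := le_trans (abs_nonneg _) (hCf (0, j))
  have hFs_le : mmgouFilt J A B s ≤ (inferInstance : MeasurableSpace Ω) :=
    sup_le (iSup₂_le fun u _ => (hJmeas u).comap_le) (iSup₂_le fun p _ => (hABmeas p.1 p.2).comap_le)
  have hG_le : mmgouFilt J A B s ⊔ MeasurableSpace.comap V0 inferInstance ≤ (inferInstance : MeasurableSpace Ω) := sup_le hFs_le hV0meas.comap_le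
  haveI : SigmaFinite ((P j).trim hG_le) := by
    have hfin : IsFiniteMeasure ((P j).trim hG_le) := ⟨by
      rw [trim_measurableSet_eq hG_le MeasurableSet.univ]
      exact measure_lt_top _ _⟩
    infer_instance
  -- definitions
  set W : Ω → (ℝ × ℝ) × S := fun ω => ((A s (s+t) ω, B s (s+t) ω), J (s+t) ω) with hWdef
  have hWmeas : Measurable W := (hABmeas s (s+t)).prodMk (hJmeas (s+t))
  set W0 : Ω → (ℝ × ℝ) × S := fun ω => ((A 0 t ω, B 0 t ω), J t ω) with hW0def
  have hW0meas : Measurable W0 := (hABmeas 0 t).prodMk (hJmeas t)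
  set κ : S → Measure ((ℝ × ℝ) × S) := fun m => (P m).map W0 with hκdef
  haveI hκp : ∀ m, IsProbabilityMeasure (κ m) := fun m =>
    Measure.isProbabilityMeasure_map hW0meas.aemeasurable
  set g : ℝ → (ℝ × ℝ) × S → ℝ := fun u w => f (w.1.1 * u + w.1.2, w.2) with hgdef
  have hgmeas : Measurable fun p : ℝ × ((ℝ × ℝ) × S) => g p.1 p.2 := by
    apply hfmeas.comp
    exact ((measurable_snd.fst.fst.mul measurable_fst).add measurable_snd.fst.snd).prodMk
      measurable_snd.snd
  have hgbdd : ∀ u w, |g u w| ≤ Cf := fun u w => hCf _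
  set Φ : ℝ × S → ℝ := fun q => ∫ w, g q.1 w ∂κ q.2 with hΦdef
  have hΦmeas : Measurable Φ := by
    refine measurable_from_prod_countable_left fun m => ?_
    show Measurable fun u : ℝ => ∫ w, g u w ∂κ m
    exact (MeasureTheory.StronglyMeasurable.integral_prod_right' (ν := κ m)
      hgmeas.stronglyMeasurable).measurable
  have hΦbdd : ∀ q, |Φ q| ≤ Cf := by
    intro q
    calc |Φ q| ≤ Cf * ((κ q.2) Set.univ).toReal := by
          simpa [Real.norm_eq_abs] using norm_integral_le_of_norm_le_const (μ := κ q.2)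
            (f := fun w => g q.1 w) (Filter.Eventually.of_forall fun w => by
              simpa [Real.norm_eq_abs] using hgbdd q.1 w)
      _ = Cf := by rw [(hκp q.2).measure_univ]; simp
  set X : Ω → ℝ := fun ω => f (A 0 (s+t) ω * V0 ω + B 0 (s+t) ω, J (s+t) ω) with hXdef
  have hXmeas : Measurable X := hfmeas.comp
    ((((hA0meas 0 (s+t)).mul hV0meas).add (hB0meas 0 (s+t))).prodMk (hJmeas (s+t)))
  have hXint : Integrable X (P j) := aux_integrable_of_bdd hXmeas.aestronglyMeasurable
    (fun ω => hCf _)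
  set cand : Ω → ℝ := fun ω => Φ (A 0 s ω * V0 ω + B 0 s ω, J s ω) with hcanddef
  -- identify the goal RHS with cand
  have hgoalRHS : (fun ω => ∫ ω', f (A 0 t ω' * (A 0 s ω * V0 ω + B 0 s ω) + B 0 t ω',
      J t ω') ∂(P (J s ω))) = cand := by
    funext ω
    show (∫ ω', f (A 0 t ω' * (A 0 s ω * V0 ω + B 0 s ω) + B 0 t ω', J t ω') ∂(P (J s ω)))
      = ∫ w, g (A 0 s ω * V0 ω + B 0 s ω) w ∂((P (J s ω)).map W0)
    have hm : Measurable fun w : (ℝ × ℝ) × S => g (A 0 s ω * V0 ω + B 0 s ω) w :=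
      hgmeas.comp measurable_prodMk_left
    rw [integral_map hW0meas.aemeasurable hm.aestronglyMeasurable]
  -- measurability with respect to the filtration
  have hABpair_Fs : ∀ (p : ℝ≥0 × ℝ≥0), p.1 ≤ p.2 → p.2 ≤ s →
      Measurable[(mmgouFilt J A B s)] fun ω => (A p.1 p.2 ω, B p.1 p.2 ω) := by
    intro p h1' h2'
    refine Measurable.of_comap_le (le_trans ?_ le_sup_right)
    exact le_iSup₂ (f := fun (p : ℝ≥0 × ℝ≥0) (_ : p.1 ≤ p.2 ∧ p.2 ≤ s) =>
      MeasurableSpace.comap (fun ω => (A p.1 p.2 ω, B p.1 p.2 ω)) inferInstance) p ⟨h1', h2'⟩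
  have hA0s_Fs : Measurable[(mmgouFilt J A B s)] (A 0 s) := measurable_fst.comp (hABpair_Fs (0, s) ((zero_le : (0:ℝ≥0) ≤ s)) le_rfl)
  have hB0s_Fs : Measurable[(mmgouFilt J A B s)] (B 0 s) := measurable_snd.comp (hABpair_Fs (0, s) ((zero_le : (0:ℝ≥0) ≤ s)) le_rfl)
  have hJs_Fs : Measurable[(mmgouFilt J A B s)] (J s) := Measurable.of_comap_le (le_trans
    (le_iSup₂ (f := fun (u : ℝ≥0) (_ : u ≤ s) => MeasurableSpace.comap (J u) inferInstance)
      s le_rfl) le_sup_left)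
  have hFs_G : mmgouFilt J A B s ≤ (mmgouFilt J A B s ⊔ MeasurableSpace.comap V0 inferInstance) := le_sup_left
  have hV0_G : Measurable[(mmgouFilt J A B s ⊔ MeasurableSpace.comap V0 inferInstance)] V0 := Measurable.of_comap_le le_sup_right
  have hcand_G : Measurable[(mmgouFilt J A B s ⊔ MeasurableSpace.comap V0 inferInstance)] cand := by
    apply hΦmeas.comp
    refine Measurable.prodMk ?_ (hJs_Fs.mono hFs_G le_rfl)
    exact ((hA0s_Fs.mono hFs_G le_rfl).mul hV0_G).add (hB0s_Fs.mono hFs_G le_rfl)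
  have hcand_meas : Measurable cand := hcand_G.mono hG_le le_rfl
  have hcand_int : Integrable cand (P j) := aux_integrable_of_bdd
    hcand_meas.aestronglyMeasurable (fun ω => hΦbdd _)
  -- consistency (MMGOU1)
  have hXX' : ∀ᵐ ω ∂(P j), X ω = g (A 0 s ω * V0 ω + B 0 s ω) (W ω) := by
    filter_upwards [h1 j 0 s (s+t) ((zero_le : (0:ℝ≥0) ≤ s)) le_self_add] with ω hω
    obtain ⟨hA, hB⟩ := hω
    show f (A 0 (s+t) ω * V0 ω + B 0 (s+t) ω, J (s+t) ω)
      = f (A s (s+t) ω * (A 0 s ω * V0 ω + B 0 s ω) + B s (s+t) ω, J (s+t) ω)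
    have harg : A 0 (s+t) ω * V0 ω + B 0 (s+t) ω
        = A s (s+t) ω * (A 0 s ω * V0 ω + B 0 s ω) + B s (s+t) ω := by
      rw [hA, hB]; ring
    rw [harg]
  -- κ on rectangles
  have hκrect : ∀ (m : S) (C : Set (ℝ × ℝ)) (D : Set S), MeasurableSet C →
      κ m (C ×ˢ D) = P m {ω' | (A 0 t ω', B 0 t ω') ∈ C ∧ J t ω' ∈ D} := by
    intro m C D hC
    show (P m).map W0 (C ×ˢ D) = _
    rw [Measure.map_apply hW0meas (hC.prod (D.to_countable.measurableSet))]
    rfl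
  -- the base disintegration identity, from (MMGOU3)
  have hbase : ∀ (Yv : Ω → ℝ), Measurable[(mmgouFilt J A B s)] Yv → ∀ (S1 : Set Ω), MeasurableSet[(mmgouFilt J A B s)] S1 →
      ∀ (U : Set ℝ) (C : Set (ℝ × ℝ)) (D : Set S), MeasurableSet U → MeasurableSet C →
      P j (S1 ∩ Yv ⁻¹' U ∩ W ⁻¹' (C ×ˢ D))
        = ∫⁻ ω in S1 ∩ Yv ⁻¹' U, κ (J s ω) (C ×ˢ D) ∂(P j) := by
    intro Yv hYv S1 hS1 U C D hU hC
    have hDmeas : MeasurableSet D := D.to_countable.measurableSet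
    set S1' := S1 ∩ Yv ⁻¹' U with hS1'def
    have hS1'Fs : MeasurableSet[(mmgouFilt J A B s)] S1' := hS1.inter (hYv hU)
    have hS1'm0 : MeasurableSet S1' := hFs_le _ hS1'Fs
    set Ev := {ω | (A s (s+t) ω, B s (s+t) ω) ∈ C ∧ J (s+t) ω ∈ D} with hEvdef
    have hEvW : Ev = W ⁻¹' (C ×ˢ D) := rfl
    have hEvm : MeasurableSet Ev := hEvW ▸ hWmeas (hC.prod hDmeas)
    have hind_int : Integrable (Set.indicator Ev fun _ => (1:ℝ)) (P j) :=
      aux_integrable_of_bdd ((measurable_const.indicator hEvm).aestronglyMeasurable)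
        (C := 1) (fun ω => by by_cases h : ω ∈ Ev <;> simp [Set.indicator_apply, h])
    have hstep : ∫ x in S1', Set.indicator Ev (fun _ => (1:ℝ)) x ∂(P j)
        = ∫ x in S1', ((P (J s x)) {ω' | (A 0 t ω', B 0 t ω') ∈ C ∧ J t ω' ∈ D}).toReal
          ∂(P j) := by
      calc ∫ x in S1', Set.indicator Ev (fun _ => (1:ℝ)) x ∂(P j)
          = ∫ x in S1', ((P j)[Set.indicator Ev fun _ => (1:ℝ) | (mmgouFilt J A B s)]) x ∂(P j) :=
            (setIntegral_condExp hFs_le hind_int hS1'Fs).symm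
        _ = _ := setIntegral_congr_ae hS1'm0 ((h3 j s t C D hC).mono fun ω hω _ => hω)
    have hLHSr : ∫ x in S1', Set.indicator Ev (fun _ => (1:ℝ)) x ∂(P j)
        = ((P j) (S1' ∩ Ev)).toReal := by
      rw [setIntegral_indicator hEvm, setIntegral_const]
      simp [Measure.real]
    have hmeasκ : Measurable fun x => κ (J s x) (C ×ˢ D) :=
      (measurable_of_countable fun m => κ m (C ×ˢ D)).comp (hJmeas s)
    have hRHSr : ∫ x in S1', ((P (J s x)) {ω' | (A 0 t ω', B 0 t ω') ∈ C ∧ J t ω' ∈ D}).toReal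
          ∂(P j)
        = (∫⁻ x in S1', κ (J s x) (C ×ˢ D) ∂(P j)).toReal := by
      calc ∫ x in S1', ((P (J s x)) {ω' | (A 0 t ω', B 0 t ω') ∈ C ∧ J t ω' ∈ D}).toReal ∂(P j)
          = ∫ x in S1', (κ (J s x) (C ×ˢ D)).toReal ∂(P j) :=
            setIntegral_congr_ae hS1'm0 (Filter.Eventually.of_forall fun x _ => by
              rw [hκrect (J s x) C D hC])
        _ = (∫⁻ x in S1', κ (J s x) (C ×ˢ D) ∂(P j)).toReal :=
            integral_toReal hmeasκ.aemeasurable (Filter.Eventually.of_forall fun x => by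
              haveI := hκp (J s x); exact measure_lt_top _ _)
    have hfin1 : (P j) (S1' ∩ Ev) ≠ ⊤ := measure_ne_top _ _
    have hfin2 : (∫⁻ x in S1', κ (J s x) (C ×ˢ D) ∂(P j)) ≠ ⊤ := by
      have hle : (∫⁻ x in S1', κ (J s x) (C ×ˢ D) ∂(P j)) ≤ (P j) S1' := by
        calc (∫⁻ x in S1', κ (J s x) (C ×ˢ D) ∂(P j)) ≤ ∫⁻ _ in S1', 1 ∂(P j) :=
              lintegral_mono fun x => by haveI := hκp (J s x); exact prob_le_one
          _ = (P j) S1' := by rw [setLIntegral_one]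
      exact ne_of_lt (lt_of_le_of_lt hle (measure_lt_top _ _))
    have heq := hstep
    rw [hLHSr, hRHSr] at heq
    have hfinal := (ENNReal.toReal_eq_toReal_iff' hfin1 hfin2).mp heq
    calc P j (S1' ∩ W ⁻¹' (C ×ˢ D)) = P j (S1' ∩ Ev) := by rw [hEvW]
      _ = _ := hfinal
  -- basic identity on the π-system
  have hbasic : ∀ (S1 : Set Ω), MeasurableSet[(mmgouFilt J A B s)] S1 → ∀ (T : Set ℝ), MeasurableSet T →
      ∫ ω in S1 ∩ V0 ⁻¹' T, cand ω ∂(P j) = ∫ ω in S1 ∩ V0 ⁻¹' T, X ω ∂(P j) := by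
    intro S1 hS1 T hT
    have hS1m0 : MeasurableSet S1 := hFs_le _ hS1
    have hEm0 : MeasurableSet (S1 ∩ V0 ⁻¹' T) := hS1m0.inter (hV0meas hT)
    set clamp : ℝ → ℝ := fun x => max 0 (min x 1) with hclampdef
    have hclampmeas : Measurable clamp := measurable_const.max (measurable_id.min measurable_const)
    have hclamp0 : clamp 0 = 0 := by simp [hclampdef]
    have hclamp1 : clamp 1 = 1 := by simp [hclampdef]
    have hclamp01 : ∀ y, 0 ≤ clamp y ∧ clamp y ≤ 1 := fun y =>
      ⟨le_max_left _ _, max_le zero_le_one (min_le_right _ _)⟩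
    set Z : Ω → ℝ × (ℝ × ℝ) × ((ℝ × ℝ) × S) × S := fun ω =>
      (Set.indicator S1 (fun _ => (1:ℝ)) ω, (A 0 s ω, B 0 s ω), W ω, J s ω) with hZdef
    have hZmeas : Measurable Z :=
      (measurable_const.indicator hS1m0).prodMk
        ((hABmeas 0 s).prodMk (hWmeas.prodMk (hJmeas s)))
    set Ψ₁ : ℝ × (ℝ × (ℝ × ℝ) × ((ℝ × ℝ) × S) × S) → ℝ := fun x =>
      clamp x.2.1 * Set.indicator T (fun _ => (1:ℝ)) x.1
        * g (x.2.2.1.1 * x.1 + x.2.2.1.2) x.2.2.2.1 with hΨ₁def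
    set Ψ₂ : ℝ × (ℝ × (ℝ × ℝ) × ((ℝ × ℝ) × S) × S) → ℝ := fun x =>
      clamp x.2.1 * Set.indicator T (fun _ => (1:ℝ)) x.1
        * Φ (x.2.2.1.1 * x.1 + x.2.2.1.2, x.2.2.2.2) with hΨ₂def
    have hTind : Measurable (Set.indicator T (fun _ => (1:ℝ))) := measurable_const.indicator hT
    have harg : Measurable fun x : ℝ × (ℝ × (ℝ × ℝ) × ((ℝ × ℝ) × S) × S) =>
        x.2.2.1.1 * x.1 + x.2.2.1.2 :=
      (measurable_snd.snd.fst.fst.mul measurable_fst).add measurable_snd.snd.fst.snd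
    have hΨ₁meas : Measurable Ψ₁ :=
      (((hclampmeas.comp measurable_snd.fst).mul (hTind.comp measurable_fst)).mul
        (hgmeas.comp (harg.prodMk measurable_snd.snd.snd.fst)))
    have hΨ₂meas : Measurable Ψ₂ :=
      (((hclampmeas.comp measurable_snd.fst).mul (hTind.comp measurable_fst)).mul
        (hΦmeas.comp (harg.prodMk measurable_snd.snd.snd.snd)))
    have hind01 : ∀ (T' : Set ℝ) (y : ℝ), 0 ≤ Set.indicator T' (fun _ => (1:ℝ)) y ∧
        Set.indicator T' (fun _ => (1:ℝ)) y ≤ 1 := by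
      intro T' y
      by_cases h : y ∈ T' <;> simp [Set.indicator_apply, h]
    have hΨbd : ∀ (a b r : ℝ), 0 ≤ a → a ≤ 1 → 0 ≤ b → b ≤ 1 → |r| ≤ Cf → |a * b * r| ≤ Cf := by
      intro a b r ha0 ha1 hb0 hb1 hr
      rw [abs_mul, abs_mul, abs_of_nonneg ha0, abs_of_nonneg hb0]
      calc a * b * |r| ≤ 1 * 1 * Cf := by
            apply mul_le_mul (mul_le_mul ha1 hb1 hb0 zero_le_one) hr (abs_nonneg r) (by norm_num)
        _ = Cf := by ring
    have hb₁ : ∀ x, |Ψ₁ x| ≤ Cf := fun x => hΨbd _ _ _ (hclamp01 _).1 (hclamp01 _).2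
      (hind01 T x.1).1 (hind01 T x.1).2 (hgbdd _ _)
    have hb₂ : ∀ x, |Ψ₂ x| ≤ Cf := fun x => hΨbd _ _ _ (hclamp01 _).1 (hclamp01 _).2
      (hind01 T x.1).1 (hind01 T x.1).2 (hΦbdd _)
    -- independence of V0 and Z
    have hJ_H : ∀ u, Measurable[(⨆ u, MeasurableSpace.comap (J u) inferInstance) ⊔
        (⨆ (p : ℝ≥0 × ℝ≥0) (_ : p.1 ≤ p.2),
          MeasurableSpace.comap (fun ω => (A p.1 p.2 ω, B p.1 p.2 ω)) inferInstance)] (J u) :=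
      fun u => Measurable.of_comap_le (le_trans
        (le_iSup (fun u => MeasurableSpace.comap (J u) inferInstance) u) le_sup_left)
    have hAB_H : ∀ (p : ℝ≥0 × ℝ≥0), p.1 ≤ p.2 →
        Measurable[(⨆ u, MeasurableSpace.comap (J u) inferInstance) ⊔
        (⨆ (p : ℝ≥0 × ℝ≥0) (_ : p.1 ≤ p.2),
          MeasurableSpace.comap (fun ω => (A p.1 p.2 ω, B p.1 p.2 ω)) inferInstance)]
        (fun ω => (A p.1 p.2 ω, B p.1 p.2 ω)) :=
      fun p hp => Measurable.of_comap_le (le_trans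
        (le_iSup₂ (f := fun (p : ℝ≥0 × ℝ≥0) (_ : p.1 ≤ p.2) =>
          MeasurableSpace.comap (fun ω => (A p.1 p.2 ω, B p.1 p.2 ω)) inferInstance) p hp)
        le_sup_right)
    have hFs_H : mmgouFilt J A B s ≤ (⨆ u, MeasurableSpace.comap (J u) inferInstance) ⊔
        (⨆ (p : ℝ≥0 × ℝ≥0) (_ : p.1 ≤ p.2),
          MeasurableSpace.comap (fun ω => (A p.1 p.2 ω, B p.1 p.2 ω)) inferInstance) :=
      sup_le (iSup₂_le fun u _ => (hJ_H u).comap_le)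
        (iSup₂_le fun p hp => (hAB_H p hp.1).comap_le)
    have hZ_H : Measurable[(⨆ u, MeasurableSpace.comap (J u) inferInstance) ⊔
        (⨆ (p : ℝ≥0 × ℝ≥0) (_ : p.1 ≤ p.2),
          MeasurableSpace.comap (fun ω => (A p.1 p.2 ω, B p.1 p.2 ω)) inferInstance)] Z := by
      refine Measurable.prodMk ?_ (Measurable.prodMk ?_ (Measurable.prodMk ?_ ?_))
      · exact measurable_const.indicator (hFs_H _ hS1)
      · exact hAB_H (0, s) ((zero_le : (0:ℝ≥0) ≤ s))
      · exact Measurable.prodMk (hAB_H (s, s+t) le_self_add) (hJ_H (s+t))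
      · exact hJ_H s
    have hindep : IndepFun V0 Z (P j) := by
      rw [ProbabilityTheory.IndepFun_iff_Indep]
      exact indep_of_indep_of_le_right (hV0indep j) hZ_H.comap_le
    -- pointwise identities
    have hΨ₁V : ∀ ω, Ψ₁ (V0 ω, Z ω) = Set.indicator (S1 ∩ V0 ⁻¹' T)
        (fun ω' => g (A 0 s ω' * V0 ω' + B 0 s ω') (W ω')) ω := by
      intro ω
      by_cases h1' : ω ∈ S1 <;> by_cases h2' : V0 ω ∈ T <;>
        simp [hΨ₁def, hZdef, Set.indicator_apply, h1', h2', hclamp0, hclamp1]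
    have hΨ₂V : ∀ ω, Ψ₂ (V0 ω, Z ω) = Set.indicator (S1 ∩ V0 ⁻¹' T) cand ω := by
      intro ω
      by_cases h1' : ω ∈ S1 <;> by_cases h2' : V0 ω ∈ T <;>
        simp [hΨ₂def, hZdef, hcanddef, Set.indicator_apply, h1', h2', hclamp0, hclamp1]
    have hEint1 : ∫ ω, Ψ₁ (V0 ω, Z ω) ∂(P j)
        = ∫ ω in S1 ∩ V0 ⁻¹' T, g (A 0 s ω * V0 ω + B 0 s ω) (W ω) ∂(P j) := by
      rw [integral_congr_ae (Filter.Eventually.of_forall hΨ₁V), integral_indicator hEm0]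
    have hEint2 : ∫ ω, Ψ₂ (V0 ω, Z ω) ∂(P j) = ∫ ω in S1 ∩ V0 ⁻¹' T, cand ω ∂(P j) := by
      rw [integral_congr_ae (Filter.Eventually.of_forall hΨ₂V), integral_indicator hEm0]
    -- the key conditional-law computation, for every fixed v
    have hkey : ∀ v : ℝ, ∫ ω, Ψ₁ (v, Z ω) ∂(P j) = ∫ ω, Ψ₂ (v, Z ω) ∂(P j) := by
      intro v
      by_cases hv : v ∈ T
      · have hYv : Measurable[(mmgouFilt J A B s)] fun ω => A 0 s ω * v + B 0 s ω :=
          (hA0s_Fs.mul_const v).add hB0s_Fs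
        have hYvm0 : Measurable fun ω => A 0 s ω * v + B 0 s ω :=
          ((hA0meas 0 s).mul_const v).add (hB0meas 0 s)
        have e1 : ∀ ω, Ψ₁ (v, Z ω) = Set.indicator S1
            (fun ω' => g (A 0 s ω' * v + B 0 s ω') (W ω')) ω := by
          intro ω
          by_cases h1' : ω ∈ S1 <;>
            simp [hΨ₁def, hZdef, Set.indicator_apply, h1', hv, hclamp0, hclamp1]
        have e2 : ∀ ω, Ψ₂ (v, Z ω) = Set.indicator S1
            (fun ω' => Φ (A 0 s ω' * v + B 0 s ω', J s ω')) ω := by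
          intro ω
          by_cases h1' : ω ∈ S1 <;>
            simp [hΨ₂def, hZdef, Set.indicator_apply, h1', hv, hclamp0, hclamp1]
        rw [integral_congr_ae (Filter.Eventually.of_forall e1),
          integral_congr_ae (Filter.Eventually.of_forall e2),
          integral_indicator hS1m0, integral_indicator hS1m0]
        exact aux_key (P j) (fun ω => A 0 s ω * v + B 0 s ω) W (J s) κ hYvm0 hWmeas
          (hJmeas s) S1 hS1m0
          (fun U C D hU hC => hbase _ hYv S1 hS1 U C D hU hC) g hgmeas hgbdd
      · simp [hΨ₁def, hΨ₂def, Set.indicator_of_notMem hv]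
    calc ∫ ω in S1 ∩ V0 ⁻¹' T, cand ω ∂(P j)
        = ∫ ω, Ψ₂ (V0 ω, Z ω) ∂(P j) := hEint2.symm
      _ = ∫ ω, Ψ₁ (V0 ω, Z ω) ∂(P j) := (aux_indep_fubini (P j) V0 Z hV0meas hZmeas hindep
            Ψ₁ Ψ₂ hΨ₁meas hΨ₂meas hb₁ hb₂ hkey).symm
      _ = ∫ ω in S1 ∩ V0 ⁻¹' T, g (A 0 s ω * V0 ω + B 0 s ω) (W ω) ∂(P j) := hEint1
      _ = ∫ ω in S1 ∩ V0 ⁻¹' T, X ω ∂(P j) :=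
          (setIntegral_congr_ae hEm0 (hXX'.mono fun ω h _ => h)).symm
  -- π-system generating (mmgouFilt J A B s ⊔ MeasurableSpace.comap V0 inferInstance)
  set πsys : Set (Set Ω) := {E | ∃ S1, MeasurableSet[(mmgouFilt J A B s)] S1 ∧
    ∃ T : Set ℝ, MeasurableSet T ∧ E = S1 ∩ V0 ⁻¹' T} with hπdef
  have hπpi : IsPiSystem πsys := by
    rintro E1 ⟨S1, hS1, T1, hT1, rfl⟩ E2 ⟨S2, hS2, T2, hT2, rfl⟩ -
    exact ⟨S1 ∩ S2, hS1.inter hS2, T1 ∩ T2, hT1.inter hT2, by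
      ext ω; simp only [Set.mem_inter_iff, Set.mem_preimage]; tauto⟩
  have hgen : (mmgouFilt J A B s ⊔ MeasurableSpace.comap V0 inferInstance) = MeasurableSpace.generateFrom πsys := by
    apply le_antisymm
    · refine sup_le ?_ ?_
      · intro E hE
        exact MeasurableSpace.measurableSet_generateFrom
          ⟨E, hE, Set.univ, MeasurableSet.univ, by simp⟩
      · intro E hE
        obtain ⟨T, hT, hTE⟩ := hE
        exact MeasurableSpace.measurableSet_generateFrom
          ⟨Set.univ, MeasurableSet.univ, T, hT, by rw [← hTE]; simp⟩
    · refine MeasurableSpace.generateFrom_le ?_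
      rintro E ⟨S1, hS1, T, hT, rfl⟩
      have hTm : MeasurableSet[MeasurableSpace.comap V0 inferInstance] (V0 ⁻¹' T) := ⟨T, hT, rfl⟩
      exact (hFs_G _ hS1).inter ((le_sup_right : MeasurableSpace.comap V0 inferInstance ≤
        mmgouFilt J A B s ⊔ MeasurableSpace.comap V0 inferInstance) _ hTm)
  -- set-integral identity on all of (mmgouFilt J A B s ⊔ MeasurableSpace.comap V0 inferInstance)
  have htot : ∫ ω, cand ω ∂(P j) = ∫ ω, X ω ∂(P j) := by
    have := hbasic Set.univ MeasurableSet.univ Set.univ MeasurableSet.univ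
    simpa using this
  have hEq : ∀ E : Set Ω, MeasurableSet[(mmgouFilt J A B s ⊔ MeasurableSpace.comap V0 inferInstance)] E →
      ∫ ω in E, cand ω ∂(P j) = ∫ ω in E, X ω ∂(P j) := by
    intro E hE
    refine MeasurableSpace.induction_on_inter (m := (mmgouFilt J A B s ⊔ MeasurableSpace.comap V0 inferInstance)) (C := fun E _ =>
      ∫ ω in E, cand ω ∂(P j) = ∫ ω in E, X ω ∂(P j)) hgen hπpi ?_ ?_ ?_ ?_ E hE
    · simp
    · rintro E' ⟨S1, hS1, T, hT, rfl⟩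
      exact hbasic S1 hS1 T hT
    · intro E' hE' hC
      have hE'm0 : MeasurableSet E' := hG_le _ hE'
      have h1' := integral_add_compl hE'm0 hcand_int
      have h2' := integral_add_compl hE'm0 hXint
      linarith [htot]
    · intro fseq hdisj hmeas hC
      rw [integral_iUnion (fun i => hG_le _ (hmeas i)) hdisj hcand_int.integrableOn,
        integral_iUnion (fun i => hG_le _ (hmeas i)) hdisj hXint.integrableOn]
      exact tsum_congr hC
  -- conclude via uniqueness of conditional expectation
  have hcondexp : cand =ᵐ[P j] (P j)[X | (mmgouFilt J A B s ⊔ MeasurableSpace.comap V0 inferInstance)] := by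
    refine ae_eq_condExp_of_forall_setIntegral_eq hG_le hXint
      (fun E hE _ => hcand_int.integrableOn) (fun E hE _ => hEq E hE) ?_
    exact ⟨cand, hcand_G.stronglyMeasurable, Filter.EventuallyEq.rfl⟩
  rw [hgoalRHS]
  exact hcondexp.symm
end

section
/- Path extension of conditional stationarity (extension of (MMGOU3) invoked in the proof of Lemma 2.5 c)): assume the stochastic functionals (A_{s,t}, B_{s,t})_{0≤s≤t} satisfy (MMGOU1)–(MMGOU5) with respect to the continuous-time Markov process J with countable state space S, and that (A_t, B_t)_{t≥0} has càdlàg paths. Fix s, h ≥ 0 and let Θ_s : Ω → (ℝ²)^{[0,h]} denote the map ω ↦ (u ↦ (A_{s,s+u}(ω), B_{s,s+u}(ω))), where (ℝ²)^{[0,h]} carries the product σ-algebra. Then for every measurable set B ⊆ (ℝ²)^{[0,h]}, every subset D ⊆ S and every j ∈ S, P_j({Θ_s ∈ B} ∩ {J_{s+h} ∈ D} | F_s) = ψ(J_s) holds P_j-almost surely, where ψ(m) := P_m({Θ_0 ∈ B} ∩ {J_h ∈ D}). -/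
open MeasureTheory ProbabilityTheory
open scoped NNReal Topology

section Aux

variable {Ω : Type*} [MeasurableSpace Ω]
  {S : Type*} [MeasurableSpace S] [MeasurableSingletonClass S] [Countable S]
  {J : ℝ≥0 → Ω → S} {A B : ℝ≥0 → ℝ≥0 → Ω → ℝ}
  {P : S → Measure Ω}

lemma measurableSet_S (D : Set S) : MeasurableSet D :=
  (Set.to_countable D).measurableSet

lemma mmgouFilt_le (hJ : ∀ t, Measurable (J t))
    (hAB : ∀ s t, Measurable fun ω => (A s t ω, B s t ω)) (t : ℝ≥0) :
    mmgouFilt J A B t ≤ ‹MeasurableSpace Ω› := by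
  refine sup_le ?_ ?_
  · exact iSup₂_le fun u _ => (hJ u).comap_le
  · exact iSup₂_le fun p _ => (hAB p.1 p.2).comap_le

lemma mmgouFilt_mono {s t : ℝ≥0} (hst : s ≤ t) :
    mmgouFilt J A B s ≤ mmgouFilt J A B t := by
  refine sup_le (le_sup_of_le_left ?_) (le_sup_of_le_right ?_)
  · exact iSup₂_le fun u hu => le_iSup₂ (f := fun (u : ℝ≥0) (_ : u ≤ t) =>
      MeasurableSpace.comap (J u) inferInstance) u (hu.trans hst)
  · exact iSup₂_le fun p hp => le_iSup₂ (f := fun (p : ℝ≥0 × ℝ≥0)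
      (_ : p.1 ≤ p.2 ∧ p.2 ≤ t) =>
      MeasurableSpace.comap (fun ω => (A p.1 p.2 ω, B p.1 p.2 ω)) inferInstance)
      p ⟨hp.1, hp.2.trans hst⟩

lemma measurable_J_filt {u t : ℝ≥0} (hu : u ≤ t) :
    Measurable[mmgouFilt J A B t] (J u) :=
  Measurable.of_comap_le (le_sup_of_le_left
    (le_iSup₂ (f := fun (u : ℝ≥0) (_ : u ≤ t) =>
      MeasurableSpace.comap (J u) inferInstance) u hu))

lemma measurable_AB_filt {p₁ p₂ t : ℝ≥0} (h₁ : p₁ ≤ p₂) (h₂ : p₂ ≤ t) :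
    Measurable[mmgouFilt J A B t] (fun ω => (A p₁ p₂ ω, B p₁ p₂ ω)) :=
  Measurable.of_comap_le (le_sup_of_le_right
    (le_iSup₂ (f := fun (p : ℝ≥0 × ℝ≥0) (_ : p.1 ≤ p.2 ∧ p.2 ≤ t) =>
      MeasurableSpace.comap (fun ω => (A p.1 p.2 ω, B p.1 p.2 ω)) inferInstance)
      (p₁, p₂) ⟨h₁, h₂⟩))

end Aux

set_option linter.unusedSectionVars false
open scoped ENNReal

section Main

variable {Ω : Type*} [MeasurableSpace Ω]
  {S : Type*} [MeasurableSpace S] [MeasurableSingletonClass S] [Countable S]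
  {J : ℝ≥0 → Ω → S} {A B : ℝ≥0 → ℝ≥0 → Ω → ℝ}
  {P : S → Measure Ω} [∀ j, IsProbabilityMeasure (P j)]

/-- Step A: the single-increment identity on rectangles, from (MMGOU3). -/
lemma mmgou_stepA (hJ : ∀ t, Measurable (J t))
    (hAB : ∀ s t, Measurable fun ω => (A s t ω, B s t ω))
    (h3 : ∀ (j : S) (s h : ℝ≥0) (C : Set (ℝ × ℝ)) (D : Set S), MeasurableSet C →
      (P j)[(Set.indicator
          {ω | (A s (s + h) ω, B s (s + h) ω) ∈ C ∧ J (s + h) ω ∈ D}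
          fun _ => (1 : ℝ)) | mmgouFilt J A B s]
        =ᵐ[P j] fun ω =>
          ((P (J s ω)) {ω' | (A 0 h ω', B 0 h ω') ∈ C ∧ J h ω' ∈ D}).toReal)
    (t δ : ℝ≥0) (j : S) {G : Set Ω} (hG : MeasurableSet[mmgouFilt J A B t] G)
    {C : Set (ℝ × ℝ)} (hC : MeasurableSet C) (D : Set S) :
    P j ({ω | (A t (t + δ) ω, B t (t + δ) ω) ∈ C ∧ J (t + δ) ω ∈ D} ∩ G)
      = ∑' m, P j (J t ⁻¹' {m} ∩ G) *
          P m {ω | (A 0 δ ω, B 0 δ ω) ∈ C ∧ J δ ω ∈ D} := by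
  classical
  set E : Set Ω := {ω | (A t (t + δ) ω, B t (t + δ) ω) ∈ C ∧ J (t + δ) ω ∈ D} with hEdef
  have hE : MeasurableSet E := by
    have : E = (fun ω => (A t (t + δ) ω, B t (t + δ) ω)) ⁻¹' C ∩
        J (t + δ) ⁻¹' D := rfl
    rw [this]
    exact (hAB _ _ hC).inter ((hJ _) (measurableSet_S D))
  have hm := mmgouFilt_le (J := J) (A := A) (B := B) hJ hAB t
  have hGm : MeasurableSet G := hm _ hG
  set ψ : S → ℝ≥0∞ := fun m => P m {ω | (A 0 δ ω, B 0 δ ω) ∈ C ∧ J δ ω ∈ D} with hψdef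
  have hint : Integrable (E.indicator fun _ => (1 : ℝ)) (P j) :=
    (integrable_const (1 : ℝ)).indicator hE
  -- integrate the condexp identity over G
  have key : ∫ ω in G, (E.indicator fun _ => (1 : ℝ)) ω ∂(P j)
      = ∫ ω in G, ((P (J t ω)) {ω' | (A 0 δ ω', B 0 δ ω') ∈ C ∧ J δ ω' ∈ D}).toReal ∂(P j) := by
    rw [← setIntegral_condExp hm hint hG]
    exact setIntegral_congr_ae hGm ((h3 j t δ C D hC).mono fun ω hω _ => hω)
  -- LHS of key
  have lhs : ∫ ω in G, (E.indicator fun _ => (1 : ℝ)) ω ∂(P j) = (P j (E ∩ G)).toReal := by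
    rw [show (E.indicator fun _ => (1 : ℝ)) = E.indicator 1 from rfl,
      integral_indicator_one hE, measureReal_restrict_apply hE, measureReal_def]
  -- RHS of key
  have hψmeas : Measurable fun ω => ψ (J t ω) :=
    (measurable_of_countable ψ).comp (hJ t)
  have rhs : ∫ ω in G, ((P (J t ω)) {ω' | (A 0 δ ω', B 0 δ ω') ∈ C ∧ J δ ω' ∈ D}).toReal ∂(P j)
      = (∫⁻ ω in G, ψ (J t ω) ∂(P j)).toReal := by
    exact integral_toReal (hψmeas.aemeasurable.restrict)
      (Filter.Eventually.of_forall fun ω => measure_lt_top _ _)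
  have lint : ∫⁻ ω in G, ψ (J t ω) ∂(P j) = ∑' m, ψ m * P j (J t ⁻¹' {m} ∩ G) := by
    rw [← lintegral_map (measurable_of_countable ψ) (hJ t), lintegral_countable' ψ]
    refine tsum_congr fun m => ?_
    rw [Measure.map_apply (hJ t) (measurableSet_singleton m),
      Measure.restrict_apply ((hJ t) (measurableSet_singleton m))]
  have hne1 : P j (E ∩ G) ≠ ⊤ := measure_ne_top _ _
  have hne2 : (∑' m, ψ m * P j (J t ⁻¹' {m} ∩ G)) ≠ ⊤ := by
    refine ne_top_of_le_ne_top (measure_ne_top (P j) G) ?_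
    calc ∑' m, ψ m * P j (J t ⁻¹' {m} ∩ G)
        ≤ ∑' m, P j (J t ⁻¹' {m} ∩ G) := by
          refine ENNReal.tsum_le_tsum fun m => ?_
          calc ψ m * P j (J t ⁻¹' {m} ∩ G) ≤ 1 * P j (J t ⁻¹' {m} ∩ G) :=
            mul_le_mul_left prob_le_one _
          _ = _ := one_mul _
      _ = P j (⋃ m, J t ⁻¹' {m} ∩ G) := by
          refine (measure_iUnion ?_ ?_).symm
          · intro m m' hmm'
            refine Set.disjoint_left.2 fun ω hω hω' => hmm' ?_
            rw [← hω.1, ← hω'.1]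
          · exact fun m => ((hJ t) (measurableSet_singleton m)).inter hGm
      _ ≤ P j G := by
          refine measure_mono ?_
          intro ω hω
          simp only [Set.mem_iUnion] at hω
          obtain ⟨m, hm'⟩ := hω
          exact hm'.2
  have := lhs.symm.trans (key.trans (rhs.trans (by rw [lint])))
  have := (ENNReal.toReal_eq_toReal_iff' hne1 hne2).1 this
  rw [this]
  exact tsum_congr fun m => mul_comm _ _


/-- The law of `((A_δ, B_δ), J_δ)` under `P m`. -/
noncomputable def mmgouKer (A B : ℝ≥0 → ℝ≥0 → Ω → ℝ) (J : ℝ≥0 → Ω → S)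
    (P : S → Measure Ω) (δ : ℝ≥0) (m : S) : Measure ((ℝ × ℝ) × S) :=
  Measure.map (fun ω => ((A 0 δ ω, B 0 δ ω), J δ ω)) (P m)

lemma mmgouKer_isProb (hJ : ∀ t, Measurable (J t))
    (hAB : ∀ s t, Measurable fun ω => (A s t ω, B s t ω)) (δ : ℝ≥0) (m : S) :
    IsProbabilityMeasure (mmgouKer A B J P δ m) :=
  Measure.isProbabilityMeasure_map ((hAB 0 δ).prodMk (hJ δ)).aemeasurable

lemma mmgouKer_apply (hJ : ∀ t, Measurable (J t))
    (hAB : ∀ s t, Measurable fun ω => (A s t ω, B s t ω)) (δ : ℝ≥0) (m : S)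
    {T : Set ((ℝ × ℝ) × S)} (hT : MeasurableSet T) :
    mmgouKer A B J P δ m T = P m {ω | ((A 0 δ ω, B 0 δ ω), J δ ω) ∈ T} :=
  Measure.map_apply ((hAB 0 δ).prodMk (hJ δ)) hT

/-- Step A': the single-increment identity, in measure (kernel) form. -/
lemma mmgou_stepA' (hJ : ∀ t, Measurable (J t))
    (hAB : ∀ s t, Measurable fun ω => (A s t ω, B s t ω))
    (h3 : ∀ (j : S) (s h : ℝ≥0) (C : Set (ℝ × ℝ)) (D : Set S), MeasurableSet C →
      (P j)[(Set.indicator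
          {ω | (A s (s + h) ω, B s (s + h) ω) ∈ C ∧ J (s + h) ω ∈ D}
          fun _ => (1 : ℝ)) | mmgouFilt J A B s]
        =ᵐ[P j] fun ω =>
          ((P (J s ω)) {ω' | (A 0 h ω', B 0 h ω') ∈ C ∧ J h ω' ∈ D}).toReal)
    (t δ : ℝ≥0) (j : S) {G : Set Ω} (hG : MeasurableSet[mmgouFilt J A B t] G) :
    Measure.map (fun ω => ((A t (t + δ) ω, B t (t + δ) ω), J (t + δ) ω))
        ((P j).restrict G)
      = Measure.sum (fun m => P j (J t ⁻¹' {m} ∩ G) • mmgouKer A B J P δ m) := by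
  classical
  have hGm : MeasurableSet G := mmgouFilt_le hJ hAB t _ hG
  have hΨ : Measurable (fun ω => ((A t (t + δ) ω, B t (t + δ) ω), J (t + δ) ω)) :=
    (hAB t (t + δ)).prodMk (hJ (t + δ))
  haveI : IsFiniteMeasure (Measure.map
      (fun ω => ((A t (t + δ) ω, B t (t + δ) ω), J (t + δ) ω)) ((P j).restrict G)) := by
    constructor
    rw [Measure.map_apply hΨ MeasurableSet.univ]
    exact (measure_mono (Set.subset_univ _)).trans_lt (measure_lt_top _ _)
  refine ext_of_generate_finite _ generateFrom_prod.symm isPiSystem_prod ?_ ?_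
  · rintro X ⟨C, hC, D, hD, rfl⟩
    simp only [Set.mem_setOf_eq] at hC hD
    rw [Measure.map_apply hΨ (hC.prod hD), Measure.restrict_apply (hΨ (hC.prod hD)),
      Set.mk_preimage_prod]
    have hset : ((fun ω => (A t (t + δ) ω, B t (t + δ) ω)) ⁻¹' C ∩ J (t + δ) ⁻¹' D)
        = {ω | (A t (t + δ) ω, B t (t + δ) ω) ∈ C ∧ J (t + δ) ω ∈ D} := rfl
    rw [hset, mmgou_stepA hJ hAB h3 t δ j hG hC D,
      Measure.sum_apply _ (hC.prod hD)]
    refine tsum_congr fun m => ?_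
    rw [Measure.smul_apply, smul_eq_mul, mmgouKer_apply hJ hAB δ m (hC.prod hD)]
    congr 1
  · rw [Measure.map_apply hΨ MeasurableSet.univ, Set.preimage_univ,
      Measure.restrict_apply MeasurableSet.univ, Set.univ_inter,
      Measure.sum_apply _ MeasurableSet.univ]
    have : ∀ m, (P j (J t ⁻¹' {m} ∩ G) • mmgouKer A B J P δ m) Set.univ
        = P j (J t ⁻¹' {m} ∩ G) := by
      intro m
      haveI := mmgouKer_isProb (P := P) hJ hAB δ m
      rw [Measure.smul_apply, measure_univ, smul_eq_mul, mul_one]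
    rw [tsum_congr this]
    rw [← measure_iUnion (fun m m' hmm' => Set.disjoint_left.2 fun ω hω hω' => hmm'
        (by rw [← hω.1, ← hω'.1]))
      (fun m => ((hJ t) (measurableSet_singleton m)).inter hGm)]
    congr 1
    ext ω
    simp only [Set.mem_iUnion, Set.mem_inter_iff, Set.mem_preimage, Set.mem_singleton_iff]
    exact ⟨fun h => ⟨J t ω, rfl, h⟩, fun h => h.choose_spec.2⟩

/-- Step B: the single-increment identity with an extra `F_t`-measurable variable. -/
lemma mmgou_stepB (hJ : ∀ t, Measurable (J t))
    (hAB : ∀ s t, Measurable fun ω => (A s t ω, B s t ω))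
    (h3 : ∀ (j : S) (s h : ℝ≥0) (C : Set (ℝ × ℝ)) (D : Set S), MeasurableSet C →
      (P j)[(Set.indicator
          {ω | (A s (s + h) ω, B s (s + h) ω) ∈ C ∧ J (s + h) ω ∈ D}
          fun _ => (1 : ℝ)) | mmgouFilt J A B s]
        =ᵐ[P j] fun ω =>
          ((P (J s ω)) {ω' | (A 0 h ω', B 0 h ω') ∈ C ∧ J h ω' ∈ D}).toReal)
    (t δ : ℝ≥0) (j : S) {G : Set Ω} (hG : MeasurableSet[mmgouFilt J A B t] G)
    {E : Type*} [MeasurableSpace E] {X : Ω → E}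
    (hX : Measurable[mmgouFilt J A B t] X) :
    Measure.map (fun ω => (X ω, ((A t (t + δ) ω, B t (t + δ) ω), J (t + δ) ω)))
        ((P j).restrict G)
      = Measure.sum (fun m =>
          (Measure.map X ((P j).restrict (J t ⁻¹' {m} ∩ G))).prod
            (mmgouKer A B J P δ m)) := by
  classical
  have hle := mmgouFilt_le (J := J) (A := A) (B := B) hJ hAB t
  have hGm : MeasurableSet G := hle _ hG
  have hX' : Measurable X := hX.mono hle le_rfl
  have hΨ0 : Measurable (fun ω => ((A t (t + δ) ω, B t (t + δ) ω), J (t + δ) ω)) :=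
    (hAB t (t + δ)).prodMk (hJ (t + δ))
  have hΨ : Measurable (fun ω =>
      (X ω, ((A t (t + δ) ω, B t (t + δ) ω), J (t + δ) ω))) := hX'.prodMk hΨ0
  haveI : ∀ m, SFinite (mmgouKer A B J P δ m) := fun m => by
    haveI := mmgouKer_isProb (P := P) hJ hAB δ m
    infer_instance
  haveI : IsFiniteMeasure (Measure.map (fun ω =>
      (X ω, ((A t (t + δ) ω, B t (t + δ) ω), J (t + δ) ω))) ((P j).restrict G)) := by
    constructor
    rw [Measure.map_apply hΨ MeasurableSet.univ]
    exact (measure_mono (Set.subset_univ _)).trans_lt (measure_lt_top _ _)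
  refine ext_of_generate_finite _ generateFrom_prod.symm isPiSystem_prod ?_ ?_
  · rintro M ⟨E₀, hE₀, T, hT, rfl⟩
    simp only [Set.mem_setOf_eq] at hE₀ hT
    rw [Measure.map_apply hΨ (hE₀.prod hT), Measure.restrict_apply (hΨ (hE₀.prod hT)),
      Set.mk_preimage_prod]
    have key := mmgou_stepA' hJ hAB h3 t δ j
      (G := G ∩ X ⁻¹' E₀) (hG.inter (hX hE₀))
    have lhs : (X ⁻¹' E₀ ∩ (fun ω => ((A t (t + δ) ω, B t (t + δ) ω), J (t + δ) ω)) ⁻¹' T) ∩ G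
        = (fun ω => ((A t (t + δ) ω, B t (t + δ) ω), J (t + δ) ω)) ⁻¹' T ∩ (G ∩ X ⁻¹' E₀) := by
      ext ω; simp only [Set.mem_inter_iff, Set.mem_preimage]; tauto
    rw [lhs, ← Measure.restrict_apply (hΨ0 hT), ← Measure.map_apply hΨ0 hT, key,
      Measure.sum_apply _ hT, Measure.sum_apply _ (hE₀.prod hT)]
    refine tsum_congr fun m => ?_
    rw [Measure.smul_apply, smul_eq_mul, Measure.prod_prod,
      Measure.map_apply hX' hE₀, Measure.restrict_apply (hX' hE₀)]
    congr 2
    ext ω; simp only [Set.mem_inter_iff, Set.mem_preimage]; tauto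
  · rw [Measure.map_apply hΨ MeasurableSet.univ, Set.preimage_univ,
      Measure.restrict_apply MeasurableSet.univ, Set.univ_inter,
      Measure.sum_apply _ MeasurableSet.univ, ← Set.univ_prod_univ]
    have : ∀ m, ((Measure.map X ((P j).restrict (J t ⁻¹' {m} ∩ G))).prod
        (mmgouKer A B J P δ m)) (Set.univ ×ˢ Set.univ) = P j (J t ⁻¹' {m} ∩ G) := by
      intro m
      rw [Measure.prod_prod, (mmgouKer_isProb (P := P) hJ hAB δ m).measure_univ, mul_one,
        Measure.map_apply hX' MeasurableSet.univ, Set.preimage_univ,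
        Measure.restrict_apply MeasurableSet.univ, Set.univ_inter]
    rw [tsum_congr this]
    rw [← measure_iUnion (fun m m' hmm' => Set.disjoint_left.2 fun ω hω hω' => hmm'
        (by rw [← hω.1, ← hω'.1]))
      (fun m => (((hJ t) (measurableSet_singleton m)).inter hGm))]
    congr 1
    ext ω
    simp only [Set.mem_iUnion, Set.mem_inter_iff, Set.mem_preimage, Set.mem_singleton_iff]
    exact ⟨fun h => ⟨J t ω, rfl, h⟩, fun h => h.choose_spec.2⟩

lemma smul_prod_meas {α β : Type*} [MeasurableSpace α] [MeasurableSpace β]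
    (c : ℝ≥0∞) (μ : Measure α) (ν : Measure β) [SFinite ν] :
    (c • μ).prod ν = c • (μ.prod ν) := by
  ext s hs
  rw [Measure.prod_apply hs, Measure.smul_apply, Measure.prod_apply hs,
    lintegral_smul_measure, smul_eq_mul]

lemma measure_sum_smul_comm {α ι κ' : Type*} [MeasurableSpace α]
    (c : κ' → ℝ≥0∞) (μ : κ' → ι → Measure α) :
    Measure.sum (fun m : ι => Measure.sum (fun m' : κ' => c m' • μ m' m))
      = Measure.sum (fun m' : κ' => c m' • Measure.sum (fun m : ι => μ m' m)) := by
  ext s hs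
  simp only [Measure.sum_apply _ hs, Measure.smul_apply, smul_eq_mul]
  rw [ENNReal.tsum_comm]
  exact tsum_congr fun m' => ENNReal.tsum_mul_left

/-- Appending the composed increment to a vector of functionals. -/
def prodSnoc {n : ℕ} {S : Type*} (q : (Fin (n + 1) → ℝ × ℝ) × ((ℝ × ℝ) × S)) :
    (Fin (n + 2) → ℝ × ℝ) × S :=
  (Fin.snoc q.1 ((q.1 (Fin.last n)).1 * q.2.1.1,
      q.2.1.1 * (q.1 (Fin.last n)).2 + q.2.1.2), q.2.2)

lemma measurable_prodSnoc {n : ℕ} {S : Type*} [MeasurableSpace S] :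
    Measurable (prodSnoc (n := n) (S := S)) := by
  refine Measurable.prodMk ?_ (measurable_snd.comp measurable_snd)
  refine measurable_pi_lambda _ fun i => ?_
  induction i using Fin.lastCases with
  | last =>
    simp only [prodSnoc, Fin.snoc_last]
    have m1 : Measurable fun q : (Fin (n + 1) → ℝ × ℝ) × ((ℝ × ℝ) × S) =>
        q.1 (Fin.last n) := (measurable_pi_apply _).comp measurable_fst
    have m2 : Measurable fun q : (Fin (n + 1) → ℝ × ℝ) × ((ℝ × ℝ) × S) =>
        q.2.1 := measurable_fst.comp measurable_snd
    exact (m1.fst.mul m2.fst).prodMk ((m2.fst.mul m1.snd).add m2.snd)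
  | cast i =>
    simp only [prodSnoc, Fin.snoc_castSucc]
    exact (measurable_pi_apply i).comp measurable_fst

lemma measurable_pi_filt {α : Type*} {m : MeasurableSpace α} {ι' : Type*} {π : ι' → Type*}
    [∀ i, MeasurableSpace (π i)] {f : α → ∀ i, π i}
    (hf : ∀ i, Measurable[m] fun c => f c i) : Measurable[m] f :=
  measurable_pi_iff.mpr hf

/-- From a joint-law decomposition of `(X, Y)` extract the law of `X` on `{Y = m}`. -/
lemma mmgou_claim1 {E' : Type*} [MeasurableSpace E'] {μ : Measure Ω}
    {Y Y₀ : Ω → S} {X X₀ : Ω → E'}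
    (hX : Measurable X) (hX0 : Measurable X₀) (hY : Measurable Y) (hY0 : Measurable Y₀)
    {G : Set Ω} (c : S → ℝ≥0∞)
    (hpair : Measure.map (fun ω => (X ω, Y ω)) (μ.restrict G)
      = Measure.sum (fun m' => c m' •
          Measure.map (fun ω => (X₀ ω, Y₀ ω)) (P m')))
    (m : S) :
    Measure.map X (μ.restrict (Y ⁻¹' {m} ∩ G))
      = Measure.sum (fun m' => c m' • Measure.map X₀ ((P m').restrict (Y₀ ⁻¹' {m}))) := by
  ext E₀ hE₀
  have hXY : Measurable fun ω => (X ω, Y ω) := hX.prodMk hY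
  have hX0Y0 : Measurable fun ω => (X₀ ω, Y₀ ω) := hX0.prodMk hY0
  have hprod : MeasurableSet (E₀ ×ˢ ({m} : Set S)) := hE₀.prod (measurableSet_singleton m)
  rw [Measure.map_apply hX hE₀, Measure.restrict_apply (hX hE₀)]
  have hset : X ⁻¹' E₀ ∩ (Y ⁻¹' {m} ∩ G)
      = ((fun ω => (X ω, Y ω)) ⁻¹' (E₀ ×ˢ ({m} : Set S))) ∩ G := by
    ext ω
    simp only [Set.mem_inter_iff, Set.mem_preimage, Set.mem_prod, Set.mem_singleton_iff]
    tauto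
  rw [hset, ← Measure.restrict_apply (hXY hprod), ← Measure.map_apply hXY hprod, hpair,
    Measure.sum_apply _ hprod, Measure.sum_apply _ hE₀]
  refine tsum_congr fun m' => ?_
  rw [Measure.smul_apply, Measure.smul_apply, smul_eq_mul, smul_eq_mul,
    Measure.map_apply hX0Y0 hprod, Measure.map_apply hX0 hE₀,
    Measure.restrict_apply (hX0 hE₀)]
  congr 1

/-- Step C: joint law of finitely many functionals together with the driving chain. -/
lemma mmgou_stepC (hJ : ∀ t, Measurable (J t))
    (hAB : ∀ s t, Measurable fun ω => (A s t ω, B s t ω))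
    (h1 : ∀ (j : S) (s u t : ℝ≥0), s ≤ u → u ≤ t → ∀ᵐ ω ∂(P j),
      A s t ω = A s u ω * A u t ω ∧ B s t ω = A u t ω * B s u ω + B u t ω)
    (h3 : ∀ (j : S) (s h : ℝ≥0) (C : Set (ℝ × ℝ)) (D : Set S), MeasurableSet C →
      (P j)[(Set.indicator
          {ω | (A s (s + h) ω, B s (s + h) ω) ∈ C ∧ J (s + h) ω ∈ D}
          fun _ => (1 : ℝ)) | mmgouFilt J A B s]
        =ᵐ[P j] fun ω =>
          ((P (J s ω)) {ω' | (A 0 h ω', B 0 h ω') ∈ C ∧ J h ω' ∈ D}).toReal) :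
    ∀ (n : ℕ) (u : Fin (n + 1) → ℝ≥0), Monotone u →
      ∀ (s : ℝ≥0) (j : S) (G : Set Ω), MeasurableSet[mmgouFilt J A B s] G →
      Measure.map (fun ω => ((fun i => (A s (s + u i) ω, B s (s + u i) ω)),
          J (s + u (Fin.last n)) ω)) ((P j).restrict G)
        = Measure.sum (fun m => P j (J s ⁻¹' {m} ∩ G) •
            Measure.map (fun ω => ((fun i => (A 0 (u i) ω, B 0 (u i) ω)),
              J (u (Fin.last n)) ω)) (P m)) := by
  intro n
  induction n with
  | zero =>
    intro u hu s j G hG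
    have hι : Measurable (fun q : (ℝ × ℝ) × S => ((fun _ : Fin 1 => q.1), q.2)) :=
      (measurable_pi_lambda _ fun _ => measurable_fst).prodMk measurable_snd
    have hpairS : Measurable (fun ω =>
        ((A s (s + u (Fin.last 0)) ω, B s (s + u (Fin.last 0)) ω),
          J (s + u (Fin.last 0)) ω)) := (hAB _ _).prodMk (hJ _)
    have hfs : (fun ω => ((fun i : Fin 1 => (A s (s + u i) ω, B s (s + u i) ω)),
        J (s + u (Fin.last 0)) ω))
        = (fun q : (ℝ × ℝ) × S => ((fun _ : Fin 1 => q.1), q.2)) ∘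
          (fun ω => ((A s (s + u (Fin.last 0)) ω, B s (s + u (Fin.last 0)) ω),
            J (s + u (Fin.last 0)) ω)) := by
      funext ω
      simp only [Function.comp_apply]
      refine Prod.ext ?_ rfl
      funext i
      rw [Subsingleton.elim i (Fin.last 0)]
    rw [hfs, ← Measure.map_map hι hpairS,
      mmgou_stepA' hJ hAB h3 s (u (Fin.last 0)) j hG,
      Measure.map_sum hι.aemeasurable]
    congr 1
    funext m
    rw [Measure.map_smul]
    congr 1
    unfold mmgouKer
    rw [Measure.map_map hι ((hAB 0 (u (Fin.last 0))).prodMk (hJ (u (Fin.last 0))))]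
    have : (fun ω => ((fun i : Fin 1 => (A 0 (u i) ω, B 0 (u i) ω)),
        J (u (Fin.last 0)) ω))
        = (fun q : (ℝ × ℝ) × S => ((fun _ : Fin 1 => q.1), q.2)) ∘
          (fun ω => ((A 0 (u (Fin.last 0)) ω, B 0 (u (Fin.last 0)) ω),
            J (u (Fin.last 0)) ω)) := by
      funext ω
      simp only [Function.comp_apply]
      refine Prod.ext ?_ rfl
      funext i
      rw [Subsingleton.elim i (Fin.last 0)]
    rw [this]
  | succ n IH =>
    intro u hu s j G hG
    have hGm : MeasurableSet G := mmgouFilt_le hJ hAB s _ hG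
    obtain ⟨δ, hδ⟩ : ∃ δ, u (Fin.castSucc (Fin.last n)) + δ = u (Fin.last (n + 1)) :=
      ⟨_, add_tsub_cancel_of_le (hu (Fin.le_last _))⟩
    haveI : ∀ m, SFinite (mmgouKer A B J P δ m) := fun m => by
      haveI := mmgouKer_isProb (P := P) hJ hAB δ m
      infer_instance
    have hX : Measurable fun ω (i : Fin (n + 1)) =>
        (A s (s + u (Fin.castSucc i)) ω, B s (s + u (Fin.castSucc i)) ω) :=
      measurable_pi_lambda _ fun i => hAB _ _
    have hX0 : Measurable fun ω (i : Fin (n + 1)) =>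
        (A 0 (u (Fin.castSucc i)) ω, B 0 (u (Fin.castSucc i)) ω) :=
      measurable_pi_lambda _ fun i => hAB _ _
    have hXf : Measurable[mmgouFilt J A B (s + u (Fin.castSucc (Fin.last n)))]
        (fun ω (i : Fin (n + 1)) =>
          (A s (s + u (Fin.castSucc i)) ω, B s (s + u (Fin.castSucc i)) ω)) := by
      refine measurable_pi_filt fun i => measurable_AB_filt le_self_add
        (add_le_add_right (hu ?_) s)
      exact Fin.castSucc_le_castSucc_iff.2 (Fin.le_last i)
    have hX0f : Measurable[mmgouFilt J A B (u (Fin.castSucc (Fin.last n)))]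
        (fun ω (i : Fin (n + 1)) =>
          (A 0 (u (Fin.castSucc i)) ω, B 0 (u (Fin.castSucc i)) ω)) := by
      refine measurable_pi_filt fun i => measurable_AB_filt (zero_le ..) (hu ?_)
      exact Fin.castSucc_le_castSucc_iff.2 (Fin.le_last i)
    -- Step B applied at time s + a with increment δ
    have step1 := mmgou_stepB hJ hAB h3 (s + u (Fin.castSucc (Fin.last n))) δ j
      (G := G) (mmgouFilt_mono le_self_add _ hG) hXf
    have htab : s + u (Fin.castSucc (Fin.last n)) + δ = s + u (Fin.last (n + 1)) := by
      rw [add_assoc, hδ]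
    rw [htab] at step1
    -- the inductive hypothesis, for the first n+1 coordinates
    have hIH := IH (fun i => u (Fin.castSucc i))
      (fun i i' hii' => hu (Fin.castSucc_le_castSucc_iff.2 hii')) s j G hG
    have claim1 := fun m => mmgou_claim1 (μ := P j) hX hX0 (hJ _) (hJ _)
      (fun m' => P j (J s ⁻¹' {m'} ∩ G)) hIH m
    simp only [claim1, Measure.prod_sum_left, smul_prod_meas] at step1
    -- measurability of the two ω-level maps
    have hΨ : Measurable (fun ω =>
        ((fun i : Fin (n + 1) =>
            (A s (s + u (Fin.castSucc i)) ω, B s (s + u (Fin.castSucc i)) ω)),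
          ((A (s + u (Fin.castSucc (Fin.last n))) (s + u (Fin.last (n + 1))) ω,
            B (s + u (Fin.castSucc (Fin.last n))) (s + u (Fin.last (n + 1))) ω),
            J (s + u (Fin.last (n + 1))) ω))) :=
      hX.prodMk (((hAB _ _).prodMk (hJ _)))
    have hΨ0 : ∀ m' : S, Measurable (fun ω =>
        ((fun i : Fin (n + 1) =>
            (A 0 (u (Fin.castSucc i)) ω, B 0 (u (Fin.castSucc i)) ω)),
          ((A (u (Fin.castSucc (Fin.last n))) (u (Fin.last (n + 1))) ω,
            B (u (Fin.castSucc (Fin.last n))) (u (Fin.last (n + 1))) ω),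
            J (u (Fin.last (n + 1))) ω))) := fun _ =>
      hX0.prodMk (((hAB _ _).prodMk (hJ _)))
    -- a.e. identification of the (n+2)-tuple with prodSnoc of the Ψ-variables
    have hae := h1 j s (s + u (Fin.castSucc (Fin.last n))) (s + u (Fin.last (n + 1)))
      le_self_add (add_le_add_right (hu (Fin.le_last _)) s)
    have hcomp : (fun ω => ((fun i : Fin (n + 2) =>
          (A s (s + u i) ω, B s (s + u i) ω)), J (s + u (Fin.last (n + 1))) ω))
        =ᵐ[(P j).restrict G] (prodSnoc ∘ (fun ω =>
          ((fun i : Fin (n + 1) =>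
            (A s (s + u (Fin.castSucc i)) ω, B s (s + u (Fin.castSucc i)) ω)),
          ((A (s + u (Fin.castSucc (Fin.last n))) (s + u (Fin.last (n + 1))) ω,
            B (s + u (Fin.castSucc (Fin.last n))) (s + u (Fin.last (n + 1))) ω),
            J (s + u (Fin.last (n + 1))) ω)))) := by
      refine ae_restrict_of_ae (hae.mono fun ω hω => ?_)
      simp only [Function.comp_apply, prodSnoc]
      refine Prod.ext ?_ rfl
      funext i
      induction i using Fin.lastCases with
      | last =>
        simp only [Fin.snoc_last]
        exact Prod.ext hω.1 hω.2
      | cast i =>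
        simp only [Fin.snoc_castSucc]
    -- push everything through prodSnoc
    rw [Measure.map_congr hcomp, ← Measure.map_map measurable_prodSnoc hΨ, step1,
      Measure.map_sum measurable_prodSnoc.aemeasurable]
    have push : ∀ (ν : S → Measure ((Fin (n + 1) → ℝ × ℝ) × ((ℝ × ℝ) × S))),
        Measure.map prodSnoc (Measure.sum (fun m' =>
          P j (J s ⁻¹' {m'} ∩ G) • ν m'))
        = Measure.sum (fun m' => P j (J s ⁻¹' {m'} ∩ G) •
            Measure.map prodSnoc (ν m')) := by
      intro ν
      rw [Measure.map_sum measurable_prodSnoc.aemeasurable]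
      congr 1
      funext m'
      rw [Measure.map_smul]
    have lhs_eq : (Measure.sum fun m => Measure.map prodSnoc
        (Measure.sum fun m' => P j (J s ⁻¹' {m'} ∩ G) •
          ((Measure.map (fun ω (i : Fin (n + 1)) =>
            (A 0 (u (Fin.castSucc i)) ω, B 0 (u (Fin.castSucc i)) ω))
            ((P m').restrict (J (u (Fin.castSucc (Fin.last n))) ⁻¹' {m}))).prod
            (mmgouKer A B J P δ m))))
        = Measure.sum fun m' => P j (J s ⁻¹' {m'} ∩ G) •
            Measure.sum (fun m => Measure.map prodSnoc
              ((Measure.map (fun ω (i : Fin (n + 1)) =>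
                (A 0 (u (Fin.castSucc i)) ω, B 0 (u (Fin.castSucc i)) ω))
                ((P m').restrict (J (u (Fin.castSucc (Fin.last n))) ⁻¹' {m}))).prod
                (mmgouKer A B J P δ m))) := by
      rw [← measure_sum_smul_comm]
      congr 1
      funext m
      exact push _
    rw [lhs_eq]
    -- identify, for each m', the inner sum with the law of the (n+2)-tuple under P m'
    congr 1
    funext m'
    congr 1
    have step2 := mmgou_stepB hJ hAB h3 (u (Fin.castSucc (Fin.last n))) δ m'
      (G := Set.univ) MeasurableSet.univ hX0f
    simp only [Measure.restrict_univ, Set.inter_univ] at step2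
    rw [hδ] at step2
    have hae0 := h1 m' 0 (u (Fin.castSucc (Fin.last n))) (u (Fin.last (n + 1)))
      (zero_le ..) (hu (Fin.le_last _))
    have hcomp0 : (fun ω => ((fun i : Fin (n + 2) =>
          (A 0 (u i) ω, B 0 (u i) ω)), J (u (Fin.last (n + 1))) ω))
        =ᵐ[P m'] (prodSnoc ∘ (fun ω =>
          ((fun i : Fin (n + 1) =>
            (A 0 (u (Fin.castSucc i)) ω, B 0 (u (Fin.castSucc i)) ω)),
          ((A (u (Fin.castSucc (Fin.last n))) (u (Fin.last (n + 1))) ω,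
            B (u (Fin.castSucc (Fin.last n))) (u (Fin.last (n + 1))) ω),
            J (u (Fin.last (n + 1))) ω)))) := by
      refine hae0.mono fun ω hω => ?_
      simp only [Function.comp_apply, prodSnoc]
      refine Prod.ext ?_ rfl
      funext i
      induction i using Fin.lastCases with
      | last =>
        simp only [Fin.snoc_last]
        exact Prod.ext hω.1 hω.2
      | cast i =>
        simp only [Fin.snoc_castSucc]
    rw [Measure.map_congr hcomp0, ← Measure.map_map measurable_prodSnoc (hΨ0 m'), step2,
      Measure.map_sum measurable_prodSnoc.aemeasurable]


/-- Step D: the path-level law identity. -/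
lemma mmgou_stepD (hJ : ∀ t, Measurable (J t))
    (hAB : ∀ s t, Measurable fun ω => (A s t ω, B s t ω))
    (h1 : ∀ (j : S) (s u t : ℝ≥0), s ≤ u → u ≤ t → ∀ᵐ ω ∂(P j),
      A s t ω = A s u ω * A u t ω ∧ B s t ω = A u t ω * B s u ω + B u t ω)
    (h3 : ∀ (j : S) (s h : ℝ≥0) (C : Set (ℝ × ℝ)) (D : Set S), MeasurableSet C →
      (P j)[(Set.indicator
          {ω | (A s (s + h) ω, B s (s + h) ω) ∈ C ∧ J (s + h) ω ∈ D}
          fun _ => (1 : ℝ)) | mmgouFilt J A B s]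
        =ᵐ[P j] fun ω =>
          ((P (J s ω)) {ω' | (A 0 h ω', B 0 h ω') ∈ C ∧ J h ω' ∈ D}).toReal)
    (s h : ℝ≥0) (j : S) {G : Set Ω} (hG : MeasurableSet[mmgouFilt J A B s] G) :
    Measure.map (fun ω => ((fun u' : Set.Icc (0 : ℝ≥0) h =>
        (A s (s + ↑u') ω, B s (s + ↑u') ω)), J (s + h) ω)) ((P j).restrict G)
      = Measure.sum (fun m => P j (J s ⁻¹' {m} ∩ G) •
          Measure.map (fun ω => ((fun u' : Set.Icc (0 : ℝ≥0) h =>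
            (A 0 (↑u') ω, B 0 (↑u') ω)), J h ω)) (P m)) := by
  classical
  have hGm : MeasurableSet G := mmgouFilt_le hJ hAB s _ hG
  have hΘs : Measurable (fun ω => ((fun u' : Set.Icc (0 : ℝ≥0) h =>
      (A s (s + ↑u') ω, B s (s + ↑u') ω)), J (s + h) ω)) :=
    (measurable_pi_iff.mpr fun _ => hAB _ _).prodMk (hJ _)
  have hΘ0 : Measurable (fun ω => ((fun u' : Set.Icc (0 : ℝ≥0) h =>
      (A 0 (↑u') ω, B 0 (↑u') ω)), J h ω)) :=
    (measurable_pi_iff.mpr fun _ => hAB _ _).prodMk (hJ _)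
  haveI : IsFiniteMeasure (Measure.map (fun ω => ((fun u' : Set.Icc (0 : ℝ≥0) h =>
      (A s (s + ↑u') ω, B s (s + ↑u') ω)), J (s + h) ω)) ((P j).restrict G)) := by
    constructor
    rw [Measure.map_apply hΘs MeasurableSet.univ]
    exact (measure_mono (Set.subset_univ _)).trans_lt (measure_lt_top _ _)
  refine ext_of_generate_finite _
    (generateFrom_eq_prod generateFrom_measurableCylinders MeasurableSpace.generateFrom_measurableSet
      ?_ isCountablySpanning_measurableSet).symm
    (isPiSystem_measurableCylinders.prod MeasurableSpace.isPiSystem_measurableSet) ?_ ?_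
  · -- measurable cylinders are countably spanning
    refine ⟨fun _ => Set.univ, fun _ => ?_, by simp [Set.iUnion_const]⟩
    have : (Set.univ : Set ((Set.Icc (0 : ℝ≥0) h) → ℝ × ℝ))
        = cylinder (∅ : Finset (Set.Icc (0 : ℝ≥0) h)) Set.univ := by
      ext f; simp [cylinder]
    rw [this]
    exact cylinder_mem_measurableCylinders _ _ MeasurableSet.univ
  · -- the generator case
    rintro M ⟨cyl, hcyl, D, hD, rfl⟩
    simp only [Set.mem_setOf_eq] at hD
    obtain ⟨I, S', hS', rfl⟩ := (mem_measurableCylinders _).1 hcyl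
    -- sorted enumeration of `I`, with `h` appended
    set e := I.orderIsoOfFin rfl with he
    set w : Fin (I.card + 1) → ℝ≥0 :=
      Fin.snoc (fun i => ((e i : Set.Icc (0 : ℝ≥0) h) : ℝ≥0)) h with hw
    have hwmono : Monotone w := by
      intro i i' hii'
      induction i' using Fin.lastCases with
      | last =>
        induction i using Fin.lastCases with
        | last => exact le_rfl
        | cast i =>
          simp only [hw, Fin.snoc_castSucc, Fin.snoc_last]
          exact (e i).1.2.2
      | cast i' =>
        induction i using Fin.lastCases with
        | last => exact absurd hii' (not_le.2 (Fin.castSucc_lt_last i'))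
        | cast i =>
          simp only [hw, Fin.snoc_castSucc]
          exact Subtype.coe_le_coe.2 (Subtype.coe_le_coe.2
            (e.monotone (Fin.castSucc_le_castSucc_iff.1 hii')))
    have hwlast : w (Fin.last I.card) = h := Fin.snoc_last _ _
    -- the reindexing map
    set r : (Fin (I.card + 1) → ℝ × ℝ) → (∀ i : I, ℝ × ℝ) :=
      fun x i => x (Fin.castSucc (e.symm i)) with hr
    have hrmeas : Measurable r := measurable_pi_iff.mpr fun i => measurable_pi_apply _
    set M' : Set ((Fin (I.card + 1) → ℝ × ℝ) × S) :=
      (fun q => (r q.1, q.2)) ⁻¹' (S' ×ˢ D) with hM'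
    have hM'meas : MeasurableSet M' :=
      ((hrmeas.comp measurable_fst).prodMk measurable_snd) (hS'.prod hD)
    have hcylmeas : MeasurableSet (cylinder (α := fun _ => ℝ × ℝ) I S') :=
      MeasurableSet.of_mem_measurableCylinders hcyl
    -- set identities
    have hres : ∀ (s₀ : ℝ≥0) (ω : Ω),
        (I.restrict (fun u' : Set.Icc (0 : ℝ≥0) h =>
          (A s₀ (s₀ + ↑u') ω, B s₀ (s₀ + ↑u') ω))
          = r (fun i => (A s₀ (s₀ + w i) ω, B s₀ (s₀ + w i) ω))) := by
      intro s₀ ω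
      funext i
      simp only [hr, Finset.restrict, hw, Fin.snoc_castSucc, e.apply_symm_apply]
    have hpre : ∀ (s₀ : ℝ≥0),
        ((fun ω => ((fun u' : Set.Icc (0 : ℝ≥0) h =>
            (A s₀ (s₀ + ↑u') ω, B s₀ (s₀ + ↑u') ω)), J (s₀ + h) ω))
          ⁻¹' ((cylinder I S') ×ˢ D))
        = (fun ω => ((fun i => (A s₀ (s₀ + w i) ω, B s₀ (s₀ + w i) ω)),
            J (s₀ + w (Fin.last I.card)) ω)) ⁻¹' M' := by
      intro s₀
      ext ω
      simp only [Set.mem_preimage, Set.mem_prod, hM', cylinder, hwlast]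
      rw [hres s₀ ω]
    have hwtuple : ∀ s₀, Measurable (fun ω =>
        ((fun i => (A s₀ (s₀ + w i) ω, B s₀ (s₀ + w i) ω)),
          J (s₀ + w (Fin.last I.card)) ω)) := fun s₀ =>
      (measurable_pi_iff.mpr fun _ => hAB _ _).prodMk (hJ _)
    -- apply step C
    have key := mmgou_stepC hJ hAB h1 h3 I.card w hwmono s j G hG
    rw [Measure.map_apply hΘs (hcylmeas.prod hD),
      Measure.restrict_apply (hΘs (hcylmeas.prod hD)), hpre s,
      ← Measure.restrict_apply ((hwtuple s) hM'meas),
      ← Measure.map_apply (hwtuple s) hM'meas, key,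
      Measure.sum_apply _ hM'meas, Measure.sum_apply _ (hcylmeas.prod hD)]
    refine tsum_congr fun m => ?_
    rw [Measure.smul_apply, Measure.smul_apply, smul_eq_mul, smul_eq_mul,
      Measure.map_apply hΘ0 (hcylmeas.prod hD)]
    congr 1
    have hpre0 : ((fun ω => ((fun u' : Set.Icc (0 : ℝ≥0) h =>
          (A 0 (↑u') ω, B 0 (↑u') ω)), J h ω)) ⁻¹' ((cylinder I S') ×ˢ D))
        = (fun ω => ((fun i => (A 0 (w i) ω, B 0 (w i) ω)),
            J (w (Fin.last I.card)) ω)) ⁻¹' M' := by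
      ext ω
      simp only [Set.mem_preimage, Set.mem_prod, hM', cylinder, hwlast]
      have : (I.restrict (fun u' : Set.Icc (0 : ℝ≥0) h =>
          (A 0 (↑u') ω, B 0 (↑u') ω))
          = r (fun i => (A 0 (w i) ω, B 0 (w i) ω))) := by
        funext i
        simp only [hr, Finset.restrict, hw, Fin.snoc_castSucc, e.apply_symm_apply]
      rw [this]
    rw [hpre0, ← Measure.map_apply ((measurable_pi_iff.mpr fun _ =>
      hAB _ _).prodMk (hJ _)) hM'meas]
  · -- total mass
    rw [Measure.map_apply hΘs MeasurableSet.univ, Set.preimage_univ,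
      Measure.restrict_apply MeasurableSet.univ, Set.univ_inter,
      Measure.sum_apply _ MeasurableSet.univ]
    have : ∀ m, (P j (J s ⁻¹' {m} ∩ G) •
        Measure.map (fun ω => ((fun u' : Set.Icc (0 : ℝ≥0) h =>
          (A 0 (↑u') ω, B 0 (↑u') ω)), J h ω)) (P m)) Set.univ
        = P j (J s ⁻¹' {m} ∩ G) := by
      intro m
      rw [Measure.smul_apply, Measure.map_apply hΘ0 MeasurableSet.univ,
        Set.preimage_univ, measure_univ, smul_eq_mul, mul_one]
    rw [tsum_congr this]
    rw [← measure_iUnion (fun m m' hmm' => Set.disjoint_left.2 fun ω hω hω' => hmm'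
        (by rw [← hω.1, ← hω'.1]))
      (fun m => ((hJ s) (measurableSet_singleton m)).inter hGm)]
    congr 1
    ext ω
    simp only [Set.mem_iUnion, Set.mem_inter_iff, Set.mem_preimage, Set.mem_singleton_iff]
    exact ⟨fun h' => ⟨J s ω, rfl, h'⟩, fun h' => h'.choose_spec.2⟩

end Main

/-- Path extension of conditional stationarity (extension of (MMGOU3)). -/
theorem mmgou3_path_extension
    {Ω : Type*} [MeasurableSpace Ω] [StandardBorelSpace Ω]
    {S : Type*} [MeasurableSpace S] [MeasurableSingletonClass S] [Countable S]
    (J : ℝ≥0 → Ω → S) (A B : ℝ≥0 → ℝ≥0 → Ω → ℝ)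
    (hJmeas : ∀ t, Measurable (J t))
    (hABmeas : ∀ s t, Measurable fun ω => (A s t ω, B s t ω))
    (P : S → Measure Ω) [∀ j, IsProbabilityMeasure (P j)]
    (hP0 : ∀ j, P j {ω | J 0 ω = j} = 1)
    (hmJ_le : (⨆ u, MeasurableSpace.comap (J u) inferInstance)
      ≤ (inferInstance : MeasurableSpace Ω))
    -- (MMGOU1) consistency
    (h1 : ∀ (j : S) (s u t : ℝ≥0), s ≤ u → u ≤ t → ∀ᵐ ω ∂(P j),
      A s t ω = A s u ω * A u t ω ∧ B s t ω = A u t ω * B s u ω + B u t ω)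
    -- (MMGOU2) conditional independence given σ(J)
    (h2 : ∀ (j : S) (a b c d : ℝ≥0), a ≤ b → b ≤ c → c ≤ d →
      CondIndep (⨆ u, MeasurableSpace.comap (J u) inferInstance)
        (mmgouABSigma A B a b) (mmgouABSigma A B c d) hmJ_le (P j))
    -- (MMGOU3) conditional stationarity
    (h3 : ∀ (j : S) (s h : ℝ≥0) (C : Set (ℝ × ℝ)) (D : Set S), MeasurableSet C →
      (P j)[(Set.indicator
          {ω | (A s (s + h) ω, B s (s + h) ω) ∈ C ∧ J (s + h) ω ∈ D}
          fun _ => (1 : ℝ)) | mmgouFilt J A B s]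
        =ᵐ[P j] fun ω =>
          ((P (J s ω)) {ω' | (A 0 h ω', B 0 h ω') ∈ C ∧ J h ω' ∈ D}).toReal)
    -- (MMGOU4) continuity in probability at 0
    (h4A : ∀ (j : S) (ε : ℝ), 0 < ε →
      Filter.Tendsto (fun t : ℝ≥0 => P j {ω | ε ≤ |A 0 t ω - 1|}) (𝓝 0) (𝓝 0))
    (h4B : ∀ (j : S) (ε : ℝ), 0 < ε →
      Filter.Tendsto (fun t : ℝ≥0 => P j {ω | ε ≤ |B 0 t ω|}) (𝓝 0) (𝓝 0))
    -- (MMGOU5) non-degeneracy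
    (h5 : ∀ (j : S) (t : ℝ≥0), ∀ᵐ ω ∂(P j), A 0 t ω ≠ 0)
    -- càdlàg paths of (A_t, B_t)
    (hcadlag : ∀ ω t, ContinuousWithinAt (fun u => (A 0 u ω, B 0 u ω)) (Set.Ici t) t ∧
      (0 < t → ∃ l : ℝ × ℝ,
        Filter.Tendsto (fun u => (A 0 u ω, B 0 u ω)) (nhdsWithin t (Set.Iio t)) (nhds l)))
    :
    -- conclusion: path extension of conditional stationarity (MMGOU3)
    ∀ (s h : ℝ≥0) (Bset : Set ((Set.Icc (0 : ℝ≥0) h) → ℝ × ℝ)) (D : Set S) (j : S),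
      MeasurableSet Bset →
      (P j)[(Set.indicator
          {ω | (fun u : Set.Icc (0 : ℝ≥0) h => (A s (s + ↑u) ω, B s (s + ↑u) ω)) ∈ Bset ∧
            J (s + h) ω ∈ D}
          fun _ => (1 : ℝ)) | mmgouFilt J A B s]
        =ᵐ[P j] fun ω =>
          ((P (J s ω))
            {ω' | (fun u : Set.Icc (0 : ℝ≥0) h => (A 0 (↑u) ω', B 0 (↑u) ω')) ∈ Bset ∧
              J h ω' ∈ D}).toReal := by
  intro s h Bset D j hBset
  have hm := mmgouFilt_le (J := J) (A := A) (B := B) hJmeas hABmeas s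
  haveI : SigmaFinite ((P j).trim hm) := inferInstance
  have hΘs : Measurable (fun ω => ((fun u : Set.Icc (0 : ℝ≥0) h =>
      (A s (s + ↑u) ω, B s (s + ↑u) ω)), J (s + h) ω)) :=
    (measurable_pi_iff.mpr fun _ => hABmeas _ _).prodMk (hJmeas _)
  have hΘ0 : Measurable (fun ω => ((fun u : Set.Icc (0 : ℝ≥0) h =>
      (A 0 (↑u) ω, B 0 (↑u) ω)), J h ω)) :=
    (measurable_pi_iff.mpr fun _ => hABmeas _ _).prodMk (hJmeas _)
  have hE : MeasurableSet
      {ω | (fun u : Set.Icc (0 : ℝ≥0) h => (A s (s + ↑u) ω, B s (s + ↑u) ω)) ∈ Bset ∧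
        J (s + h) ω ∈ D} := hΘs (hBset.prod (measurableSet_S D))
  have hf : Integrable (Set.indicator
      {ω | (fun u : Set.Icc (0 : ℝ≥0) h => (A s (s + ↑u) ω, B s (s + ↑u) ω)) ∈ Bset ∧
        J (s + h) ω ∈ D} fun _ => (1 : ℝ)) (P j) :=
    (integrable_const (1 : ℝ)).indicator hE
  set ψ : S → ℝ≥0∞ := fun m => P m
      {ω' | (fun u : Set.Icc (0 : ℝ≥0) h => (A 0 (↑u) ω', B 0 (↑u) ω')) ∈ Bset ∧
        J h ω' ∈ D} with hψdef
  have hgmeasF : Measurable[mmgouFilt J A B s] fun ω => (ψ (J s ω)).toReal :=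
    (measurable_of_countable fun m => (ψ m).toReal).comp (measurable_J_filt le_rfl)
  have hgmeas : Measurable fun ω => (ψ (J s ω)).toReal := hgmeasF.mono hm le_rfl
  have hgint : Integrable (fun ω => (ψ (J s ω)).toReal) (P j) := by
    refine Integrable.mono' (integrable_const (1 : ℝ)) hgmeas.aestronglyMeasurable
      (Filter.Eventually.of_forall fun ω => ?_)
    rw [Real.norm_eq_abs, abs_of_nonneg ENNReal.toReal_nonneg]
    calc (ψ (J s ω)).toReal ≤ (1 : ℝ≥0∞).toReal :=
      ENNReal.toReal_mono ENNReal.one_ne_top prob_le_one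
    _ = 1 := by simp
  refine (ae_eq_condExp_of_forall_setIntegral_eq hm hf
    (fun G hG _ => hgint.integrableOn) (fun G hG _ => ?_)
    (StronglyMeasurable.aestronglyMeasurable hgmeasF.stronglyMeasurable)).symm
  have hGm : MeasurableSet G := hm _ hG
  -- right-hand side: the probability of the event intersected with G
  have hrhs : ∫ ω in G, (Set.indicator
      {ω | (fun u : Set.Icc (0 : ℝ≥0) h => (A s (s + ↑u) ω, B s (s + ↑u) ω)) ∈ Bset ∧
        J (s + h) ω ∈ D} fun _ => (1 : ℝ)) ω ∂(P j)
      = (P j ({ω | (fun u : Set.Icc (0 : ℝ≥0) h =>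
          (A s (s + ↑u) ω, B s (s + ↑u) ω)) ∈ Bset ∧ J (s + h) ω ∈ D} ∩ G)).toReal := by
    rw [show (Set.indicator
        {ω | (fun u : Set.Icc (0 : ℝ≥0) h => (A s (s + ↑u) ω, B s (s + ↑u) ω)) ∈ Bset ∧
          J (s + h) ω ∈ D} fun _ => (1 : ℝ))
        = Set.indicator {ω | (fun u : Set.Icc (0 : ℝ≥0) h =>
            (A s (s + ↑u) ω, B s (s + ↑u) ω)) ∈ Bset ∧ J (s + h) ω ∈ D} 1 from rfl,
      integral_indicator_one hE, measureReal_restrict_apply hE, measureReal_def]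
  -- left-hand side: lintegral computation
  have hlhs : ∫ ω in G, (ψ (J s ω)).toReal ∂(P j)
      = (∑' m, ψ m * P j (J s ⁻¹' {m} ∩ G)).toReal := by
    have hψcomp : Measurable fun ω => ψ (J s ω) := (measurable_of_countable ψ).comp (hJmeas s)
    rw [integral_toReal (hψcomp.aemeasurable.restrict)
      (Filter.Eventually.of_forall fun ω => measure_lt_top _ _)]
    congr 1
    rw [← lintegral_map (measurable_of_countable ψ) (hJmeas s), lintegral_countable' ψ]
    refine tsum_congr fun m => ?_
    rw [Measure.map_apply (hJmeas s) (measurableSet_singleton m),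
      Measure.restrict_apply ((hJmeas s) (measurableSet_singleton m))]
  rw [hrhs, hlhs]
  congr 1
  -- the key identity, from Step D
  have key := mmgou_stepD hJmeas hABmeas h1 h3 s h j hG
  calc ∑' m, ψ m * P j (J s ⁻¹' {m} ∩ G)
      = (Measure.sum (fun m => P j (J s ⁻¹' {m} ∩ G) •
          Measure.map (fun ω => ((fun u : Set.Icc (0 : ℝ≥0) h =>
            (A 0 (↑u) ω, B 0 (↑u) ω)), J h ω)) (P m))) (Bset ×ˢ D) := by
        rw [Measure.sum_apply _ (hBset.prod (measurableSet_S D))]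
        refine tsum_congr fun m => ?_
        rw [Measure.smul_apply, smul_eq_mul,
          Measure.map_apply hΘ0 (hBset.prod (measurableSet_S D))]
        exact mul_comm _ _
    _ = Measure.map (fun ω => ((fun u : Set.Icc (0 : ℝ≥0) h =>
          (A s (s + ↑u) ω, B s (s + ↑u) ω)), J (s + h) ω)) ((P j).restrict G)
          (Bset ×ˢ D) := by rw [key]
    _ = P j ({ω | (fun u : Set.Icc (0 : ℝ≥0) h =>
          (A s (s + ↑u) ω, B s (s + ↑u) ω)) ∈ Bset ∧ J (s + h) ω ∈ D} ∩ G) := by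
        rw [Measure.map_apply hΘs (hBset.prod (measurableSet_S D)),
          Measure.restrict_apply (hΘs (hBset.prod (measurableSet_S D)))]
        rfl
end
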